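/- arXiv:1902.03584 — 5 statements merged into one kernel-verified Lean document; each statement's English description precedes it below -/
import Mathlib

section
/- Let H be an n×n matrix over a field 𝔽 and let n₁, …, n_k be natural numbers with k ≥ 1. Then H is a product of k idempotent n×n matrices of nullities n₁, …, n_k respectively if and only if n(H) ≥ nᵢ ≥ 0 for each i and n₁ + ⋯ + n_k ≥ r(I − H), where I is the n×n identity matrix. -/
open Matrix

/-- The nullity of a square matrix: the dimension of its null space. -/
noncomputable def nullity {𝔽 : Type*} [Field 𝔽] {ι : Type*} [Fintype ι]
    (A : Matrix ι ι 𝔽) : ℕ :=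
  Module.finrank 𝔽 (LinearMap.ker A.mulVecLin)

/-- `n₀(A) = n(A) - dim(R(A) ∩ N(A))`. -/
noncomputable def nZero {𝔽 : Type*} [Field 𝔽] {ι : Type*} [Fintype ι]
    (A : Matrix ι ι 𝔽) : ℕ :=
  nullity A -
    Module.finrank 𝔽
      (LinearMap.range A.mulVecLin ⊓ LinearMap.ker A.mulVecLin : Submodule 𝔽 (ι → 𝔽))

namespace Stmt11Aux

open Submodule LinearMap Module

section Abstract

variable {𝔽 : Type*} [Field 𝔽] {V : Type*} [AddCommGroup V] [Module 𝔽 V]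
  [FiniteDimensional 𝔽 V]

/-- A relative complement extension: any subspace `C₀ ≤ U` disjoint from `K ≤ U` extends to a
complement of `K` inside `U`. -/
lemma relCompl (U K C₀ : Submodule 𝔽 V) (hKU : K ≤ U) (hC₀U : C₀ ≤ U)
    (hC₀K : C₀ ⊓ K = ⊥) :
    ∃ C : Submodule 𝔽 V, C₀ ≤ C ∧ C ≤ U ∧ C ⊓ K = ⊥ ∧ C ⊔ K = U := by
  obtain ⟨T, hT⟩ := Submodule.exists_isCompl (K ⊔ C₀)
  refine ⟨(C₀ ⊔ T) ⊓ U, le_inf le_sup_left hC₀U, inf_le_right, ?_, ?_⟩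
  · rw [eq_bot_iff]
    intro x hx
    have hxK : x ∈ K := (Submodule.mem_inf.mp hx).2
    have hxCT : x ∈ C₀ ⊔ T := (Submodule.mem_inf.mp (Submodule.mem_inf.mp hx).1).1
    obtain ⟨c, hc, y, hy, hxy⟩ := Submodule.mem_sup.mp hxCT
    have hyKC : y ∈ K ⊔ C₀ := by
      have hy' : y = x - c := by rw [← hxy]; abel
      rw [hy']
      exact sub_mem (mem_sup_left hxK) (mem_sup_right hc)
    have hy0 : y = 0 := Submodule.disjoint_def.mp hT.disjoint y hyKC hy
    have hxc : x = c := by rw [← hxy, hy0, add_zero]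
    have hfin : x ∈ C₀ ⊓ K := Submodule.mem_inf.mpr ⟨hxc ▸ hc, hxK⟩
    rw [hC₀K] at hfin
    exact hfin
  · apply le_antisymm (sup_le inf_le_right hKU)
    intro x hxU
    have hxT : x ∈ (K ⊔ C₀) ⊔ T := by rw [hT.sup_eq_top]; trivial
    obtain ⟨y, hy, z, hz, hxyz⟩ := Submodule.mem_sup.mp hxT
    obtain ⟨kk, hkk, c, hc, hykc⟩ := Submodule.mem_sup.mp hy
    have hmem : c + z ∈ (C₀ ⊔ T) ⊓ U := by
      refine Submodule.mem_inf.mpr ⟨add_mem (mem_sup_left hc) (mem_sup_right hz), ?_⟩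
      have hcz : c + z = x - kk := by rw [← hxyz, ← hykc]; abel
      rw [hcz]
      exact sub_mem hxU (hKU hkk)
    have hxsum : x = (c + z) + kk := by rw [← hxyz, ← hykc]; abel
    rw [hxsum]
    exact add_mem (mem_sup_left hmem) (mem_sup_right hkk)

/-- Inside any subspace `P` there is a subspace of any dimension `t ≤ dim P`. -/
lemma exists_le_finrank_eq (P : Submodule 𝔽 V) (t : ℕ) (h : t ≤ finrank 𝔽 P) :
    ∃ K : Submodule 𝔽 V, K ≤ P ∧ finrank 𝔽 K = t := by
  obtain ⟨f, hf⟩ := exists_linearIndependent_of_le_finrank (R := 𝔽) (M := ↥P) h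
  have hg : LinearIndependent 𝔽 (fun i : Fin t => ((f i : ↥P) : V)) :=
    hf.map' P.subtype (ker_subtype P)
  refine ⟨span 𝔽 (Set.range fun i : Fin t => ((f i : ↥P) : V)), ?_, ?_⟩
  · rw [span_le]
    rintro x ⟨i, rfl⟩
    exact (f i).2
  · rw [finrank_span_eq_card hg, Fintype.card_fin]

lemma isCompl_split {K W A B : Submodule 𝔽 V} (hKW : K ⊓ W = ⊥) (hKWtop : K ⊔ W = ⊤)
    (hAB : A ⊓ B = ⊥) (hABK : A ⊔ B = K) : IsCompl A (B ⊔ W) := by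
  have hAK : A ≤ K := hABK ▸ le_sup_left
  have hBK : B ≤ K := hABK ▸ le_sup_right
  constructor
  · rw [disjoint_iff, eq_bot_iff]
    intro x hx
    have hxA : x ∈ A := (Submodule.mem_inf.mp hx).1
    obtain ⟨b, hb, w, hw, hxbw⟩ := Submodule.mem_sup.mp (Submodule.mem_inf.mp hx).2
    have hwK : w ∈ K ⊓ W := by
      refine Submodule.mem_inf.mpr ⟨?_, hw⟩
      have hw' : w = x - b := by rw [← hxbw]; abel
      rw [hw']
      exact sub_mem (hAK hxA) (hBK hb)
    rw [hKW] at hwK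
    have hw0 : w = 0 := hwK
    have hxb : x = b := by rw [← hxbw, hw0, add_zero]
    have hfin : x ∈ A ⊓ B := Submodule.mem_inf.mpr ⟨hxA, hxb ▸ hb⟩
    rw [hAB] at hfin
    exact hfin
  · rw [codisjoint_iff, ← sup_assoc, hABK, hKWtop]

/-- The key inductive step: peel off one idempotent factor of prescribed nullity `t`. -/
lemma step (f : Module.End 𝔽 V) {t m s : ℕ}
    (ht : t ≤ finrank 𝔽 (ker f)) (hm : m ≤ finrank 𝔽 (ker f)) (hms : m ≤ s)
    (hr : finrank 𝔽 (range (1 - f)) ≤ s + t) :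
    ∃ e g : Module.End 𝔽 V, e * e = e ∧ finrank 𝔽 (ker e) = t ∧ f = g * e ∧
      m ≤ finrank 𝔽 (ker g) ∧ finrank 𝔽 (range (1 - g)) ≤ s := by
  classical
  set φ : Module.End 𝔽 V := 1 - f with hφdef
  have hφ_apply : ∀ x : V, φ x = x - f x := fun x => by
    simp [hφdef, LinearMap.sub_apply]
  set nn := finrank 𝔽 V with hnn
  set d := finrank 𝔽 (ker f) with hd
  set r := finrank 𝔽 (range φ) with hrdef
  have hφK' : ∀ x ∈ ker f, φ x = x := fun x hx => by
    rw [hφ_apply, mem_ker.mp hx, sub_zero]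
  have hker_le : (ker f : Submodule 𝔽 V) ≤ range φ := by
    intro x hx
    exact ⟨x, hφK' x hx⟩
  have hdr : d ≤ r := Submodule.finrank_mono hker_le
  have hsup_top : range f ⊔ range φ = ⊤ := by
    rw [eq_top_iff]
    intro x _
    have hx : x = f x + φ x := by rw [hφ_apply]; abel
    rw [hx]
    exact add_mem (mem_sup_left ⟨x, rfl⟩) (mem_sup_right ⟨x, rfl⟩)
  set M := range f ⊓ range φ with hMdef
  have hrn : finrank 𝔽 (range f) + d = nn := finrank_range_add_finrank_ker f
  have hrφn : r + finrank 𝔽 (ker φ) = nn := finrank_range_add_finrank_ker φ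
  have hMeq : nn + finrank 𝔽 M = finrank 𝔽 (range f) + r := by
    have h := Submodule.finrank_sup_add_finrank_inf_eq (range f) (range φ)
    rw [hsup_top, finrank_top, ← hMdef] at h
    omega
  -- choose K ≤ ker f of dimension t
  obtain ⟨K, hKker, hKrank⟩ := exists_le_finrank_eq (ker f) t ht
  have hKrφ : K ≤ range φ := le_trans hKker hker_le
  have hφK : ∀ x ∈ K, φ x = x := fun x hx => hφK' x (hKker hx)
  -- complements N of K⊓M in M, K'' of K⊓M in K
  obtain ⟨N, -, hNM, hNKM, hNsup⟩ := relCompl M (K ⊓ M) ⊥ inf_le_right bot_le (by simp)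
  obtain ⟨K'', -, hK''K, hK''KM, hK''sup⟩ := relCompl K (K ⊓ M) ⊥ inf_le_left bot_le (by simp)
  have hKMN : finrank 𝔽 (K ⊓ M : Submodule 𝔽 V) + finrank 𝔽 N = finrank 𝔽 M := by
    have h := Submodule.finrank_sup_add_finrank_inf_eq N (K ⊓ M)
    rw [hNsup, hNKM, finrank_bot] at h
    omega
  have hKMK'' : finrank 𝔽 (K ⊓ M : Submodule 𝔽 V) + finrank 𝔽 K'' = t := by
    have h := Submodule.finrank_sup_add_finrank_inf_eq K'' (K ⊓ M)
    rw [hK''sup, hK''KM, finrank_bot, hKrank] at h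
    omega
  set q := min (finrank 𝔽 N) (finrank 𝔽 K'') with hq
  obtain ⟨N₀, hN₀N, hN₀rank⟩ := exists_le_finrank_eq N q (min_le_left _ _)
  obtain ⟨K₀, hK₀K'', hK₀rank⟩ := exists_le_finrank_eq K'' q (min_le_right _ _)
  have hK₀K : K₀ ≤ K := le_trans hK₀K'' hK''K
  have hfr : finrank 𝔽 ↥N₀ = finrank 𝔽 ↥K₀ := by rw [hN₀rank, hK₀rank]
  set ε : (↥N₀) ≃ₗ[𝔽] ↥K₀ := LinearEquiv.ofFinrankEq _ _ hfr with hεdef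
  set β : ↥N₀ →ₗ[𝔽] V := (K₀.subtype ∘ₗ (ε : ↥N₀ →ₗ[𝔽] ↥K₀)) - N₀.subtype with hβdef
  have hβ_apply : ∀ x : ↥N₀, β x = ((ε x : ↥K₀) : V) - (x : V) := fun x => rfl
  set C₀ := range β with hC₀def
  have hC₀K : C₀ ⊓ K = ⊥ := by
    rw [eq_bot_iff]
    intro x hx
    obtain ⟨y, hy⟩ := (Submodule.mem_inf.mp hx).1
    have hxK : x ∈ K := (Submodule.mem_inf.mp hx).2
    have hyv : (y : V) = ((ε y : ↥K₀) : V) - x := by rw [← hy, hβ_apply]; abel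
    have hyK : (y : V) ∈ K := by rw [hyv]; exact sub_mem (hK₀K (ε y).2) hxK
    have hyNKM : (y : V) ∈ N ⊓ (K ⊓ M) :=
      Submodule.mem_inf.mpr ⟨hN₀N y.2, Submodule.mem_inf.mpr ⟨hyK, hNM (hN₀N y.2)⟩⟩
    rw [hNKM] at hyNKM
    have hy0 : (y : V) = 0 := hyNKM
    have hyy : y = 0 := Subtype.ext hy0
    have hx0 : x = 0 := by rw [← hy, hyy, map_zero]
    simpa [hx0] using Submodule.zero_mem (⊥ : Submodule 𝔽 V)
  have hC₀U : C₀ ≤ range φ := by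
    rintro x ⟨y, rfl⟩
    rw [hβ_apply]
    have h1 : (y : V) ∈ M := hNM (hN₀N y.2)
    exact sub_mem (hKrφ (hK₀K (ε y).2)) (Submodule.mem_inf.mp h1).2
  obtain ⟨C, hC₀C, hCU, hCK, hCsup⟩ := relCompl (range φ) K C₀ hKrφ hC₀U hC₀K
  have hCrank : finrank 𝔽 C + t = r := by
    have h := Submodule.finrank_sup_add_finrank_inf_eq C K
    rw [hCsup, hCK, finrank_bot, hKrank] at h
    omega
  set S := K ⊓ (C ⊔ M) with hSdef
  have hK₀CM : K₀ ≤ C ⊔ M := by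
    intro x hx
    have hb : β (ε.symm ⟨x, hx⟩) = x - ((ε.symm ⟨x, hx⟩ : ↥N₀) : V) := by
      rw [hβ_apply, ε.apply_symm_apply]
    have hxeq : x = β (ε.symm ⟨x, hx⟩) + ((ε.symm ⟨x, hx⟩ : ↥N₀) : V) := by
      rw [hb]; abel
    rw [hxeq]
    exact add_mem (mem_sup_left (hC₀C ⟨_, rfl⟩))
      (mem_sup_right (hNM (hN₀N (ε.symm ⟨x, hx⟩).2)))
  have hKMK₀ : (K ⊓ M) ⊔ K₀ ≤ S :=
    sup_le (le_inf inf_le_left (le_trans inf_le_right le_sup_right)) (le_inf hK₀K hK₀CM)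
  have hSrank : finrank 𝔽 (K ⊓ M : Submodule 𝔽 V) + q ≤ finrank 𝔽 S := by
    have hdisj : (K ⊓ M) ⊓ K₀ = ⊥ := by
      rw [eq_bot_iff]
      intro x hx
      have hx2 : x ∈ K'' ⊓ (K ⊓ M) :=
        Submodule.mem_inf.mpr ⟨hK₀K'' (Submodule.mem_inf.mp hx).2, (Submodule.mem_inf.mp hx).1⟩
      rw [hK''KM] at hx2
      exact hx2
    have h := Submodule.finrank_sup_add_finrank_inf_eq (K ⊓ M) K₀
    rw [hdisj, finrank_bot, hK₀rank] at h
    have hmono := Submodule.finrank_mono hKMK₀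
    omega
  -- the numbers
  set t₃ := min t (d - m) with ht₃def
  set t₁ := min (t - t₃) (s + t - r) with ht₁def
  set t₂ := t - t₃ - t₁ with ht₂def
  have ht₂S : t₂ ≤ finrank 𝔽 S := by omega
  obtain ⟨K₂, hK₂S, hK₂rank⟩ := exists_le_finrank_eq S t₂ ht₂S
  have hK₂K : K₂ ≤ K := le_trans hK₂S inf_le_left
  obtain ⟨K', -, hK'K, hK'K₂, hK'sup⟩ := relCompl K K₂ ⊥ hK₂K bot_le (by simp)
  have hK'rank : finrank 𝔽 K' + t₂ = t := by
    have h := Submodule.finrank_sup_add_finrank_inf_eq K' K₂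
    rw [hK'sup, hK'K₂, finrank_bot, hKrank, hK₂rank] at h
    omega
  obtain ⟨K₁, hK₁K', hK₁rank⟩ := exists_le_finrank_eq K' t₁ (by omega)
  have hK₁K : K₁ ≤ K := le_trans hK₁K' hK'K
  have hK₁K₂ : K₁ ⊓ K₂ = ⊥ := by
    rw [eq_bot_iff]
    intro x hx
    have hx2 : x ∈ K' ⊓ K₂ :=
      Submodule.mem_inf.mpr ⟨hK₁K' (Submodule.mem_inf.mp hx).1, (Submodule.mem_inf.mp hx).2⟩
    rw [hK'K₂] at hx2
    exact hx2
  obtain ⟨K₃, -, hK₃K, hK₃d, hK₃sup⟩ :=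
    relCompl K (K₁ ⊔ K₂) ⊥ (sup_le hK₁K hK₂K) bot_le (by simp)
  have hK₁₂rank : finrank 𝔽 (K₁ ⊔ K₂ : Submodule 𝔽 V) = t₁ + t₂ := by
    have h := Submodule.finrank_sup_add_finrank_inf_eq K₁ K₂
    rw [hK₁K₂, finrank_bot, hK₁rank, hK₂rank] at h
    omega
  have hK₃rank : finrank 𝔽 K₃ = t₃ := by
    have h := Submodule.finrank_sup_add_finrank_inf_eq K₃ (K₁ ⊔ K₂)
    rw [hK₃sup, hK₃d, finrank_bot, hK₁₂rank, hKrank] at h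
    omega
  -- the complement W of K
  set W := comap φ C with hWdef
  have hKW : K ⊓ W = ⊥ := by
    rw [eq_bot_iff]
    intro x hx
    have hxK := (Submodule.mem_inf.mp hx).1
    have hxW : φ x ∈ C := (Submodule.mem_inf.mp hx).2
    rw [hφK x hxK] at hxW
    have hx2 : x ∈ C ⊓ K := Submodule.mem_inf.mpr ⟨hxW, hxK⟩
    rw [hCK] at hx2
    exact hx2
  have hkerφW : ker φ ≤ W := by
    intro x hx
    show φ x ∈ C
    rw [mem_ker.mp hx]
    exact zero_mem C
  have hWrank : finrank 𝔽 W + t = nn := by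
    have h1 := finrank_range_add_finrank_ker (φ ∘ₗ W.subtype)
    have h2 : range (φ ∘ₗ W.subtype) = C := by
      rw [range_comp, Submodule.range_subtype, Submodule.map_comap_eq]
      exact inf_eq_right.mpr hCU
    have h3 : ker (φ ∘ₗ W.subtype) = comap W.subtype (ker φ) := ker_comp _ _
    have h4 : finrank 𝔽 (comap W.subtype (ker φ)) = finrank 𝔽 (ker φ) :=
      (Submodule.comapSubtypeEquivOfLe hkerφW).finrank_eq
    rw [h2, h3, h4] at h1
    omega
  have hKWtop : K ⊔ W = ⊤ := by
    have h := Submodule.finrank_sup_add_finrank_inf_eq K W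
    rw [hKW, finrank_bot, hKrank] at h
    apply Submodule.eq_top_of_finrank_eq
    omega
  have hcKW : IsCompl K W := ⟨disjoint_iff.mpr hKW, codisjoint_iff.mpr hKWtop⟩
  set pe := Submodule.projectionOnto W K hcKW.symm with hpedef
  set e : Module.End 𝔽 V := W.subtype ∘ₗ pe with hedef
  have he_W : ∀ x ∈ W, e x = x := by
    intro x hx
    show ((pe x : ↥W) : V) = x
    rw [show x = ((⟨x, hx⟩ : ↥W) : V) from rfl, Submodule.projectionOnto_apply_left]
  have he_K : ∀ x ∈ K, e x = 0 := by
    intro x hx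
    show ((pe x : ↥W) : V) = 0
    rw [Submodule.projectionOnto_apply_of_mem_right hcKW.symm hx, Submodule.coe_zero]
  have he_mem : ∀ x, e x ∈ W := fun x => (pe x).2
  have he_idem : e * e = e := by
    apply LinearMap.ext
    intro x
    show e (e x) = e x
    exact he_W _ (he_mem x)
  have he_ker : finrank 𝔽 (ker e) = t := by
    have hke : ker e = K := by
      ext x
      constructor
      · intro hx
        have hx0 : ((pe x : ↥W) : V) = 0 := hx
        have hpx : pe x = 0 := Subtype.ext hx0
        exact (Submodule.projectionOnto_apply_eq_zero_iff hcKW.symm).mp hpx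
      · intro hx
        exact mem_ker.mpr (he_K x hx)
    rw [hke, hKrank]
  -- M'' and the projection πM
  obtain ⟨M'', -, hM''M, hM''CM, hM''sup⟩ := relCompl M (C ⊓ M) ⊥ inf_le_right bot_le (by simp)
  obtain ⟨Z', hZ'⟩ := Submodule.exists_isCompl (C ⊔ M'')
  have hcM'' : IsCompl M'' (C ⊔ Z') := by
    constructor
    · rw [disjoint_iff, eq_bot_iff]
      intro x hx
      have hxM'' := (Submodule.mem_inf.mp hx).1
      obtain ⟨c, hc, z, hz, hxcz⟩ := Submodule.mem_sup.mp (Submodule.mem_inf.mp hx).2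
      have hzmem : z ∈ (C ⊔ M'') ⊓ Z' := by
        refine Submodule.mem_inf.mpr ⟨?_, hz⟩
        have hz' : z = x - c := by rw [← hxcz]; abel
        rw [hz']
        exact sub_mem (mem_sup_right hxM'') (mem_sup_left hc)
      rw [hZ'.inf_eq_bot] at hzmem
      have hz0 : z = 0 := hzmem
      have hxc : x = c := by rw [← hxcz, hz0, add_zero]
      have hx2 : x ∈ M'' ⊓ (C ⊓ M) :=
        Submodule.mem_inf.mpr ⟨hxM'', Submodule.mem_inf.mpr ⟨hxc ▸ hc, hM''M hxM''⟩⟩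
      rw [hM''CM] at hx2
      exact hx2
    · rw [codisjoint_iff, ← sup_assoc, sup_comm M'' C, hZ'.sup_eq_top]
  set pM := Submodule.projectionOnto M'' (C ⊔ Z') hcM'' with hpMdef
  set πM : Module.End 𝔽 V := M''.subtype ∘ₗ pM with hπMdef
  have hπM_range : ∀ x, πM x ∈ range f := fun x =>
    (Submodule.mem_inf.mp (hM''M (pM x).2)).1
  have hπM_K₂ : ∀ x ∈ K₂, x - πM x ∈ C := by
    intro x hx
    have hxCM : x ∈ C ⊔ M'' := by
      have hxS : x ∈ S := hK₂S hx
      have hx2 : x ∈ C ⊔ M := (Submodule.mem_inf.mp hxS).2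
      rw [← hM''sup] at hx2
      obtain ⟨c, hc, y, hy, hxy⟩ := Submodule.mem_sup.mp hx2
      obtain ⟨m2, hm2, cc, hcc, hycc⟩ := Submodule.mem_sup.mp hy
      have hxeq : x = (c + cc) + m2 := by rw [← hxy, ← hycc]; abel
      rw [hxeq]
      exact add_mem (mem_sup_left (add_mem hc (Submodule.mem_inf.mp hcc).1)) (mem_sup_right hm2)
    obtain ⟨c, hc, m2, hm2, hxy⟩ := Submodule.mem_sup.mp hxCM
    have h1 : pM c = 0 :=
      Submodule.projectionOnto_apply_of_mem_right hcM'' (mem_sup_left hc)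
    have h2 : ((pM m2 : ↥M'') : V) = m2 := by
      rw [show m2 = ((⟨m2, hm2⟩ : ↥M'') : V) from rfl,
        Submodule.projectionOnto_apply_left]
    have hπx : πM x = m2 := by
      rw [← hxy]
      show ((pM (c + m2) : ↥M'') : V) = m2
      rw [map_add, h1, zero_add, h2]
    rw [hπx]
    have hxm : x - m2 = c := by rw [← hxy]; abel
    rw [hxm]
    exact hc
  -- the projections π₂ and π₃
  have hc3 : IsCompl K₃ ((K₁ ⊔ K₂) ⊔ W) := isCompl_split hKW hKWtop hK₃d hK₃sup
  have hsup2 : K₂ ⊔ (K₁ ⊔ K₃) = K := by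
    apply le_antisymm (sup_le hK₂K (sup_le hK₁K hK₃K))
    rw [← hK₃sup]
    apply sup_le
    · exact le_trans le_sup_right le_sup_right
    · exact sup_le (le_trans le_sup_left le_sup_right) le_sup_left
  have hinf2 : K₂ ⊓ (K₁ ⊔ K₃) = ⊥ := by
    rw [eq_bot_iff]
    intro x hx
    have hxK₂ := (Submodule.mem_inf.mp hx).1
    obtain ⟨a, ha, b, hb, hxab⟩ := Submodule.mem_sup.mp (Submodule.mem_inf.mp hx).2
    have hbmem : b ∈ K₃ ⊓ (K₁ ⊔ K₂) := by
      refine Submodule.mem_inf.mpr ⟨hb, ?_⟩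
      have hb' : b = x - a := by rw [← hxab]; abel
      rw [hb']
      exact sub_mem (mem_sup_right hxK₂) (mem_sup_left ha)
    rw [hK₃d] at hbmem
    have hb0 : b = 0 := hbmem
    have hxa : x = a := by rw [← hxab, hb0, add_zero]
    have hx2 : x ∈ K₁ ⊓ K₂ := Submodule.mem_inf.mpr ⟨hxa ▸ ha, hxK₂⟩
    rw [hK₁K₂] at hx2
    exact hx2
  have hc2 : IsCompl K₂ ((K₁ ⊔ K₃) ⊔ W) := isCompl_split hKW hKWtop hinf2 hsup2
  set p2 := Submodule.projectionOnto K₂ ((K₁ ⊔ K₃) ⊔ W) hc2 with hp2def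
  set p3 := Submodule.projectionOnto K₃ ((K₁ ⊔ K₂) ⊔ W) hc3 with hp3def
  set π₂ : Module.End 𝔽 V := K₂.subtype ∘ₗ p2 with hπ₂def
  set π₃ : Module.End 𝔽 V := K₃.subtype ∘ₗ p3 with hπ₃def
  have hπ₂_left : ∀ x ∈ K₂, π₂ x = x := by
    intro x hx
    show ((p2 x : ↥K₂) : V) = x
    rw [show x = ((⟨x, hx⟩ : ↥K₂) : V) from rfl, Submodule.projectionOnto_apply_left]
  have hπ₂_zero : ∀ x ∈ (K₁ ⊔ K₃) ⊔ W, π₂ x = 0 := by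
    intro x hx
    show ((p2 x : ↥K₂) : V) = 0
    rw [Submodule.projectionOnto_apply_of_mem_right hc2 hx, Submodule.coe_zero]
  have hπ₃_left : ∀ x ∈ K₃, π₃ x = x := by
    intro x hx
    show ((p3 x : ↥K₃) : V) = x
    rw [show x = ((⟨x, hx⟩ : ↥K₃) : V) from rfl, Submodule.projectionOnto_apply_left]
  have hπ₃_zero : ∀ x ∈ (K₁ ⊔ K₂) ⊔ W, π₃ x = 0 := by
    intro x hx
    show ((p3 x : ↥K₃) : V) = 0
    rw [Submodule.projectionOnto_apply_of_mem_right hc3 hx, Submodule.coe_zero]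
  set g : Module.End 𝔽 V := f ∘ₗ e + πM ∘ₗ π₂ + π₃ with hgdef
  have hg_apply : ∀ x, g x = f (e x) + πM (π₂ x) + π₃ x := fun x => rfl
  have hg_w : ∀ x ∈ W, g x = f x := by
    intro x hx
    rw [hg_apply, he_W x hx, hπ₂_zero x (mem_sup_right hx), hπ₃_zero x (mem_sup_right hx),
      map_zero, add_zero, add_zero]
  have hg_a : ∀ x ∈ K₁, g x = 0 := by
    intro x hx
    rw [hg_apply, he_K x (hK₁K hx), hπ₂_zero x (mem_sup_left (mem_sup_left hx)),
      hπ₃_zero x (mem_sup_left (mem_sup_left hx)), map_zero, map_zero, add_zero, add_zero]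
  have hg_b : ∀ x ∈ K₂, g x = πM x := by
    intro x hx
    rw [hg_apply, he_K x (hK₂K hx), hπ₂_left x hx,
      hπ₃_zero x (mem_sup_left (mem_sup_right hx)), map_zero, add_zero, zero_add]
  have hg_c : ∀ x ∈ K₃, g x = x := by
    intro x hx
    rw [hg_apply, he_K x (hK₃K hx), hπ₂_zero x (mem_sup_left (mem_sup_right hx)),
      hπ₃_left x hx, map_zero, map_zero, zero_add, zero_add]
  have hdec : ∀ x : V, ∃ w ∈ W, ∃ a ∈ K₁, ∃ b ∈ K₂, ∃ c ∈ K₃, x = w + a + b + c := by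
    intro x
    have hx : x ∈ K ⊔ W := by rw [hKWtop]; trivial
    obtain ⟨kk, hkk, w, hw, hxkw⟩ := Submodule.mem_sup.mp hx
    rw [← hK₃sup] at hkk
    obtain ⟨c, hc, ab, hab, hkabc⟩ := Submodule.mem_sup.mp hkk
    obtain ⟨a, ha, b, hb, habeq⟩ := Submodule.mem_sup.mp hab
    exact ⟨w, hw, a, ha, b, hb, c, hc, by rw [← hxkw, ← hkabc, ← habeq]; abel⟩
  have hfeq : f = g * e := by
    apply LinearMap.ext
    intro x
    obtain ⟨w, hw, a, ha, b, hb, c, hc, rfl⟩ := hdec x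
    show f (w + a + b + c) = g (e (w + a + b + c))
    have hew : e (w + a + b + c) = w := by
      rw [map_add, map_add, map_add, he_W w hw, he_K a (hK₁K ha), he_K b (hK₂K hb),
        he_K c (hK₃K hc), add_zero, add_zero, add_zero]
    rw [hew, hg_w w hw, map_add, map_add, map_add,
      mem_ker.mp (hKker (hK₁K ha)), mem_ker.mp (hKker (hK₂K hb)),
      mem_ker.mp (hKker (hK₃K hc)), add_zero, add_zero, add_zero]
  have hrange1g : range (1 - g) ≤ C ⊔ K₁ := by
    rintro y ⟨x, rfl⟩
    obtain ⟨w, hw, a, ha, b, hb, c, hc, rfl⟩ := hdec x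
    have hval : (1 - g) (w + a + b + c) = (w - f w) + a + (b - πM b) := by
      have h1 : g (w + a + b + c) = f w + πM b + c := by
        rw [map_add, map_add, map_add, hg_w w hw, hg_a a ha, hg_b b hb, hg_c c hc]
        abel
      rw [LinearMap.sub_apply, Module.End.one_apply, h1]
      abel
    rw [hval]
    have hφw : w - f w ∈ C := by
      have hw2 : φ w ∈ C := hw
      rwa [hφ_apply] at hw2
    exact add_mem (add_mem (mem_sup_left hφw) (mem_sup_right ha))
      (mem_sup_left (hπM_K₂ b hb))
  have hrank1g : finrank 𝔽 (range (1 - g)) ≤ s := by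
    have h1 := Submodule.finrank_mono hrange1g
    have h2 := Submodule.finrank_add_le_finrank_add_finrank C K₁
    omega
  have hrange_g : range g ≤ range f ⊔ K₃ := by
    rintro y ⟨x, rfl⟩
    rw [hg_apply]
    exact add_mem (add_mem (mem_sup_left ⟨e x, rfl⟩) (mem_sup_left (hπM_range (π₂ x))))
      (mem_sup_right (p3 x).2)
  have hkerg : m ≤ finrank 𝔽 (ker g) := by
    have h1 := Submodule.finrank_mono hrange_g
    have h2 := Submodule.finrank_add_le_finrank_add_finrank (range f) K₃
    have h3 := finrank_range_add_finrank_ker g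
    omega
  exact ⟨e, g, he_idem, he_ker, hfeq, hkerg, hrank1g⟩

/-- The base case: a single factor. -/
lemma base (f : Module.End 𝔽 V) {t : ℕ}
    (h1 : t ≤ finrank 𝔽 (ker f)) (h2 : finrank 𝔽 (range (1 - f)) ≤ t) :
    f * f = f ∧ finrank 𝔽 (ker f) = t := by
  set φ : Module.End 𝔽 V := 1 - f with hφdef
  have hφ_apply : ∀ x : V, φ x = x - f x := fun x => by
    simp [hφdef, LinearMap.sub_apply]
  have hker_le : (ker f : Submodule 𝔽 V) ≤ range φ := by
    intro x hx
    exact ⟨x, by rw [hφ_apply, mem_ker.mp hx, sub_zero]⟩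
  have hdr : finrank 𝔽 (ker f) ≤ finrank 𝔽 (range φ) := Submodule.finrank_mono hker_le
  have hsup_top : range f ⊔ range φ = ⊤ := by
    rw [eq_top_iff]
    intro x _
    have hx : x = f x + φ x := by rw [hφ_apply]; abel
    rw [hx]
    exact add_mem (mem_sup_left ⟨x, rfl⟩) (mem_sup_right ⟨x, rfl⟩)
  have hteq : finrank 𝔽 (ker f) = t := le_antisymm (le_trans hdr h2) h1
  have hbot : range f ⊓ range φ = ⊥ := by
    have h := Submodule.finrank_sup_add_finrank_inf_eq (range f) (range φ)
    rw [hsup_top, finrank_top] at h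
    have h3 := finrank_range_add_finrank_ker f
    have h0 : finrank 𝔽 (range f ⊓ range φ : Submodule 𝔽 V) = 0 := by omega
    exact Submodule.finrank_eq_zero.mp h0
  refine ⟨?_, hteq⟩
  apply LinearMap.ext
  intro x
  have hmem : f (φ x) ∈ range f ⊓ range φ := by
    refine Submodule.mem_inf.mpr ⟨⟨φ x, rfl⟩, ⟨f x, ?_⟩⟩
    rw [hφ_apply, hφ_apply, map_sub]
  rw [hbot] at hmem
  have hz : f (φ x) = 0 := hmem
  rw [hφ_apply, map_sub] at hz
  have hz' : f (f x) = f x := by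
    have := sub_eq_zero.mp hz
    exact this.symm
  exact hz'

end Abstract

section Matrices

variable {𝔽 : Type*} [Field 𝔽] {n : ℕ}

lemma mulVecLin_one_sub (A : Matrix (Fin n) (Fin n) 𝔽) :
    (1 - A).mulVecLin = 1 - A.mulVecLin := by
  apply LinearMap.ext
  intro v
  simp [Matrix.mulVecLin_apply, Matrix.sub_mulVec, Matrix.one_mulVec,
    LinearMap.sub_apply]

lemma mulVecLin_inj :
    Function.Injective (Matrix.mulVecLin : Matrix (Fin n) (Fin n) 𝔽 → _) := by
  intro A B h
  have hAB : Matrix.toLin' A = Matrix.toLin' B := by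
    rw [Matrix.toLin'_apply', Matrix.toLin'_apply', h]
  exact Matrix.toLin'.injective hAB

lemma nullity_eq (A : Matrix (Fin n) (Fin n) 𝔽) :
    nullity A = Module.finrank 𝔽 (LinearMap.ker A.mulVecLin) := rfl

lemma rank_eq (A : Matrix (Fin n) (Fin n) 𝔽) :
    A.rank = Module.finrank 𝔽 (LinearMap.range A.mulVecLin) := rfl

lemma rank_add_nullity (A : Matrix (Fin n) (Fin n) 𝔽) : A.rank + nullity A = n := by
  rw [rank_eq, nullity_eq]
  have h := LinearMap.finrank_range_add_finrank_ker A.mulVecLin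
  rwa [Module.finrank_fin_fun] at h

lemma rank_add_le_matrix (A B : Matrix (Fin n) (Fin n) 𝔽) :
    (A + B).rank ≤ A.rank + B.rank := by
  rw [rank_eq, rank_eq, rank_eq, Matrix.mulVecLin_add]
  have h1 : LinearMap.range (A.mulVecLin + B.mulVecLin) ≤
      LinearMap.range A.mulVecLin ⊔ LinearMap.range B.mulVecLin := by
    rintro y ⟨x, rfl⟩
    exact add_mem (Submodule.mem_sup_left ⟨x, rfl⟩) (Submodule.mem_sup_right ⟨x, rfl⟩)
  exact le_trans (Submodule.finrank_mono h1)
    (Submodule.finrank_add_le_finrank_add_finrank _ _)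

lemma rank_one_sub_idem (E : Matrix (Fin n) (Fin n) 𝔽) (hE : E * E = E) :
    (1 - E).rank = nullity E := by
  rw [rank_eq, nullity_eq, mulVecLin_one_sub]
  have hcomp : E.mulVecLin ∘ₗ E.mulVecLin = E.mulVecLin := by
    rw [← Matrix.mulVecLin_mul, hE]
  have hreq : LinearMap.range (1 - E.mulVecLin) = LinearMap.ker E.mulVecLin := by
    apply le_antisymm
    · rintro y ⟨x, rfl⟩
      rw [LinearMap.mem_ker, LinearMap.sub_apply, Module.End.one_apply, map_sub]
      have hxx : E.mulVecLin (E.mulVecLin x) = E.mulVecLin x := by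
        have := congrArg (fun ψ => ψ x) hcomp
        simpa using this
      rw [hxx, sub_self]
    · intro x hx
      refine ⟨x, ?_⟩
      rw [LinearMap.sub_apply, Module.End.one_apply, LinearMap.mem_ker.mp hx, sub_zero]
  rw [hreq]

lemma rank_le_of_mem_prod :
    ∀ (l : List (Matrix (Fin n) (Fin n) 𝔽)) (A : Matrix (Fin n) (Fin n) 𝔽),
      A ∈ l → l.prod.rank ≤ A.rank := by
  intro l
  induction l with
  | nil => intro A hA; simp at hA
  | cons B l ihl =>
    intro A hA
    rw [List.prod_cons]
    rcases List.mem_cons.mp hA with h | h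
    · subst h; exact Matrix.rank_mul_le_left _ _
    · exact le_trans (Matrix.rank_mul_le_right _ _) (ihl A h)

lemma rank_one_sub_le :
    ∀ l : List (Matrix (Fin n) (Fin n) 𝔽),
      (1 - l.prod).rank ≤ (l.map fun A => (1 - A).rank).sum := by
  intro l
  induction l with
  | nil => simp
  | cons B l ihl =>
    rw [List.prod_cons, List.map_cons, List.sum_cons]
    have hid : (1 : Matrix (Fin n) (Fin n) 𝔽) - B * l.prod =
        (1 - B) + B * (1 - l.prod) := by noncomm_ring
    rw [hid]
    refine le_trans (rank_add_le_matrix _ _) ?_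
    exact add_le_add le_rfl (le_trans (Matrix.rank_mul_le_right _ _) ihl)

/-- The backward direction, by induction on the number of factors. -/
lemma back : ∀ (k : ℕ) (nv : Fin (k + 1) → ℕ) (H : Matrix (Fin n) (Fin n) 𝔽),
    (∀ i, nv i ≤ nullity H) → (1 - H).rank ≤ ∑ i, nv i →
    ∃ E : Fin (k + 1) → Matrix (Fin n) (Fin n) 𝔽,
      H = (List.ofFn E).prod ∧ ∀ i, E i * E i = E i ∧ nullity (E i) = nv i := by
  intro k
  induction k with
  | zero =>
    intro nv H hnull hrank
    have hr0 : Module.finrank 𝔽 (LinearMap.range (1 - H.mulVecLin)) ≤ nv 0 := by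
      rw [← mulVecLin_one_sub]
      have h := hrank
      rw [Fin.sum_univ_one] at h
      exact h
    obtain ⟨hb1, hb2⟩ := base H.mulVecLin (hnull 0) hr0
    refine ⟨fun _ => H, by simp, fun i => ?_⟩
    have hi : i = 0 := Fin.ext (by omega)
    subst hi
    constructor
    · apply mulVecLin_inj
      rw [Matrix.mulVecLin_mul]
      rw [← Module.End.mul_eq_comp]
      exact hb1
    · exact hb2
  | succ j ih =>
    intro nv H hnull hrank
    set f := H.mulVecLin with hfdef
    set t := nv (Fin.last (j + 1)) with htdef
    set m := Finset.univ.sup (fun i : Fin (j + 1) => nv i.castSucc) with hmdef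
    set s := ∑ i : Fin (j + 1), nv i.castSucc with hsdef
    have hsum : (∑ i, nv i) = s + t := Fin.sum_univ_castSucc nv
    have hms : m ≤ s := Finset.sup_le fun i _ =>
      Finset.single_le_sum (f := fun i : Fin (j + 1) => nv i.castSucc)
        (fun _ _ => Nat.zero_le _) (Finset.mem_univ i)
    have hmnull : m ≤ Module.finrank 𝔽 (LinearMap.ker f) :=
      Finset.sup_le fun i _ => hnull i.castSucc
    have hrf : Module.finrank 𝔽 (LinearMap.range (1 - f)) ≤ s + t := by
      rw [← mulVecLin_one_sub]
      have h := hrank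
      rw [hsum] at h
      exact h
    obtain ⟨e, g, he_idem, he_ker, hfeq, hg_ker, hg_rank⟩ :=
      step f (hnull (Fin.last (j + 1))) hmnull hms hrf
    set G := LinearMap.toMatrix' g with hGdef
    set Ee := LinearMap.toMatrix' e with hEedef
    have hG : G.mulVecLin = g := by
      rw [← Matrix.toLin'_apply']
      exact Matrix.toLin'_toMatrix' g
    have hEe : Ee.mulVecLin = e := by
      rw [← Matrix.toLin'_apply']
      exact Matrix.toLin'_toMatrix' e
    obtain ⟨E', hE'prod, hE'props⟩ := ih (fun i => nv i.castSucc) G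
      (fun i => by
        rw [nullity_eq, hG]
        refine le_trans ?_ hg_ker
        rw [hmdef]
        exact Finset.le_sup (f := fun i : Fin (j + 1) => nv i.castSucc) (Finset.mem_univ i))
      (by
        rw [rank_eq, mulVecLin_one_sub, hG]
        exact hg_rank)
    refine ⟨Fin.snoc E' Ee, ?_, ?_⟩
    · have hH : H = (List.ofFn E').prod * Ee := by
        apply mulVecLin_inj
        rw [Matrix.mulVecLin_mul, ← hE'prod, hG, hEe, ← Module.End.mul_eq_comp]
        exact hfeq
      have hfun : (fun i : Fin (j + 1) =>
          (Fin.snoc E' Ee : Fin (j + 2) → Matrix (Fin n) (Fin n) 𝔽) i.castSucc) = E' := by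
        funext i
        simp only [Fin.snoc_castSucc]
      rw [List.ofFn_succ', List.prod_concat, hfun, Fin.snoc_last, hH]
    · intro i
      refine Fin.lastCases ?_ ?_ i
      · simp only [Fin.snoc_last]
        constructor
        · apply mulVecLin_inj
          rw [Matrix.mulVecLin_mul, hEe, ← Module.End.mul_eq_comp]
          exact he_idem
        · rw [nullity_eq, hEe]
          exact he_ker
      · intro i'
        simp only [Fin.snoc_castSucc]
        exact hE'props i'

end Matrices

end Stmt11Aux

/-- **[Botha, Knüppel]** `H` is a product of `k ≥ 1` idempotent matrices of nullities
`n₁, …, n_k` iff `n(H) ≥ nᵢ ≥ 0` for each `i` and `n₁ + ⋯ + n_k ≥ r(I − H)`. -/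
theorem stmt11 {𝔽 : Type*} [Field 𝔽] {n k : ℕ} (hk : 1 ≤ k)
    (H : Matrix (Fin n) (Fin n) 𝔽) (nv : Fin k → ℕ) :
    (∃ E : Fin k → Matrix (Fin n) (Fin n) 𝔽,
        H = (List.ofFn E).prod ∧ ∀ i, E i * E i = E i ∧ nullity (E i) = nv i) ↔
      ((∀ i, nv i ≤ nullity H ∧ 0 ≤ nv i) ∧ (1 - H).rank ≤ ∑ i, nv i) := by
  constructor
  · rintro ⟨E, rfl, hE⟩
    constructor
    · intro i
      refine ⟨?_, Nat.zero_le _⟩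
      have h1 : (List.ofFn E).prod.rank ≤ (E i).rank :=
        Stmt11Aux.rank_le_of_mem_prod _ _ (by rw [List.mem_ofFn]; exact ⟨i, rfl⟩)
      have h2 := Stmt11Aux.rank_add_nullity (List.ofFn E).prod
      have h3 := Stmt11Aux.rank_add_nullity (E i)
      have h4 := (hE i).2
      omega
    · have h1 := Stmt11Aux.rank_one_sub_le (List.ofFn E)
      have h2 : ((List.ofFn E).map fun A => (1 - A).rank).sum = ∑ i, nv i := by
        rw [List.map_ofFn, List.sum_ofFn]
        exact Finset.sum_congr rfl fun i _ => by
          rw [Function.comp_apply, Stmt11Aux.rank_one_sub_idem _ (hE i).1, (hE i).2]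
      rw [h2] at h1
      exact h1
  · rintro ⟨h1, h2⟩
    obtain ⟨k', rfl⟩ : ∃ k', k = k' + 1 := ⟨k - 1, by omega⟩
    exact Stmt11Aux.back k' nv H (fun i => (h1 i).1) h2
end

section
/- Let F be an n×n matrix over a field 𝔽. Then F is a product of two square-zero n×n matrices if and only if r(F) ≤ n₀(F). -/
open Matrix

open Module Submodule LinearMap

/-- Rank-nullity for the restriction of a linear map to a submodule. -/
lemma aux_finrank_map_add_inf_ker {𝔽 V W : Type*} [Field 𝔽] [AddCommGroup V] [Module 𝔽 V]
    [AddCommGroup W] [Module 𝔽 W] [FiniteDimensional 𝔽 V] (f : V →ₗ[𝔽] W)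
    (p : Submodule 𝔽 V) :
    finrank 𝔽 (p.map f) + finrank 𝔽 (p ⊓ ker f : Submodule 𝔽 V) = finrank 𝔽 p := by
  have h := LinearMap.finrank_range_add_finrank_ker (f.domRestrict p)
  rw [LinearMap.range_domRestrict, LinearMap.ker_domRestrict] at h
  have h2 : (ker f).comap p.subtype = (p ⊓ ker f).comap p.subtype := by
    ext x; simp [x.2]
  rw [h2, (Submodule.comapSubtypeEquivOfLe (inf_le_left : p ⊓ ker f ≤ p)).finrank_eq] at h
  exact h

/-- Existence of a subspace of `p` of prescribed dimension, disjoint from `q`. -/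
lemma aux_exists_disjoint_subspace {𝔽 V : Type*} [Field 𝔽] [AddCommGroup V] [Module 𝔽 V]
    [FiniteDimensional 𝔽 V] (p q : Submodule 𝔽 V) (k : ℕ)
    (hk : k + finrank 𝔽 (q ⊓ p : Submodule 𝔽 V) ≤ finrank 𝔽 p) :
    ∃ W : Submodule 𝔽 V, W ≤ p ∧ finrank 𝔽 W = k ∧ W ⊓ q = ⊥ := by
  obtain ⟨M₁, hM₁⟩ := (q ⊓ p : Submodule 𝔽 V).exists_isCompl
  set C : Submodule 𝔽 V := p ⊓ M₁ with hC
  have hCp : C ≤ p := inf_le_left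
  have hCq : C ⊓ (q ⊓ p) = ⊥ := by
    rw [eq_bot_iff]
    rintro x ⟨⟨hxp, hxM⟩, hxqp⟩
    have hx : x ∈ (q ⊓ p) ⊓ M₁ := ⟨hxqp, hxM⟩
    rwa [disjoint_iff.mp hM₁.disjoint] at hx
  have hCq' : (q ⊓ p) ⊓ C = ⊥ := by rw [inf_comm]; exact hCq
  -- p = (q ⊓ p) ⊔ C  by the modular law
  have hsup : (q ⊓ p) ⊔ C = p := by
    rw [hC, inf_comm p M₁, ← sup_inf_assoc_of_le _ (inf_le_right : q ⊓ p ≤ p),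
      codisjoint_iff.mp hM₁.codisjoint, top_inf_eq]
  have hfr : finrank 𝔽 (q ⊓ p : Submodule 𝔽 V) + finrank 𝔽 C = finrank 𝔽 p := by
    have h0 := Submodule.finrank_sup_add_finrank_inf_eq (q ⊓ p) C
    rw [hsup, hCq', finrank_bot, add_zero] at h0
    exact h0.symm
  have hkC : k ≤ finrank 𝔽 C := by omega
  -- choose a basis of C and span the first k vectors
  let b : Basis (Fin (finrank 𝔽 C)) 𝔽 C := Module.finBasis 𝔽 C
  let v : Fin k → V := fun i => (b (Fin.castLE hkC i) : V)
  have hli : LinearIndependent 𝔽 v := by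
    have h1 : LinearIndependent 𝔽 fun i : Fin (finrank 𝔽 C) => ((b i : C) : V) :=
      b.linearIndependent.map' C.subtype (Submodule.ker_subtype C)
    exact h1.comp (Fin.castLE hkC) (Fin.castLE_injective hkC)
  refine ⟨Submodule.span 𝔽 (Set.range v), ?_, ?_, ?_⟩
  · rw [Submodule.span_le]
    rintro x ⟨i, rfl⟩
    exact hCp (b (Fin.castLE hkC i)).2
  · rw [finrank_span_eq_card hli, Fintype.card_fin]
  · have hWC : Submodule.span 𝔽 (Set.range v) ≤ C := by
      rw [Submodule.span_le]
      rintro x ⟨i, rfl⟩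
      exact (b (Fin.castLE hkC i)).2
    rw [eq_bot_iff]
    rintro x ⟨hxs, hxq⟩
    have hxC := hWC hxs
    have hx : x ∈ C ⊓ (q ⊓ p) := ⟨hxC, hxq, hxC.1⟩
    rwa [hCq] at hx

/-- A complement of `W` can be chosen to contain any subspace disjoint from `W`. -/
lemma aux_exists_isCompl_le {𝔽 V : Type*} [Field 𝔽] [AddCommGroup V] [Module 𝔽 V]
    (W R : Submodule 𝔽 V) (h : W ⊓ R = ⊥) :
    ∃ W' : Submodule 𝔽 V, IsCompl W W' ∧ R ≤ W' := by
  obtain ⟨T, hT⟩ := (W ⊔ R).exists_isCompl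
  refine ⟨R ⊔ T, ⟨?_, ?_⟩, le_sup_left⟩
  · rw [disjoint_iff, ← le_bot_iff]
    intro x ⟨hxW, hxRT⟩
    obtain ⟨r, hr, t, ht, rfl⟩ := Submodule.mem_sup.mp hxRT
    have htWR : t ∈ W ⊔ R := by
      have heq : t = (r + t) - r := by abel
      rw [heq]
      exact Submodule.sub_mem _ (le_sup_left (a := W) (b := R) hxW)
        (le_sup_right (a := W) (b := R) hr)
    have ht0 : t = 0 := by
      have hx : t ∈ (W ⊔ R) ⊓ T := ⟨htWR, ht⟩
      rwa [disjoint_iff.mp hT.disjoint, Submodule.mem_bot] at hx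
    subst ht0
    rw [add_zero] at hxW ⊢
    have : r ∈ W ⊓ R := ⟨hxW, hr⟩
    rwa [h, Submodule.mem_bot] at this
  · rw [codisjoint_iff, ← sup_assoc, codisjoint_iff.mp hT.codisjoint]

/-- **[Botha, theorem 3]** `F` is a product of two square-zero matrices iff
`r(F) ≤ n₀(F)`. -/
theorem stmt12 {𝔽 : Type*} [Field 𝔽] {n : ℕ} (F : Matrix (Fin n) (Fin n) 𝔽) :
    (∃ Z₁ Z₂ : Matrix (Fin n) (Fin n) 𝔽,
        F = Z₁ * Z₂ ∧ Z₁ * Z₁ = 0 ∧ Z₂ * Z₂ = 0) ↔ F.rank ≤ nZero F := by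
  set f := F.mulVecLin with hf
  set N := ker f with hN
  set R := range f with hR
  constructor
  · -- necessity
    rintro ⟨Z₁, Z₂, hF, hZ1, hZ2⟩
    set A := Z₁.mulVecLin with hA
    set B := Z₂.mulVecLin with hB
    have hfAB : f = A ∘ₗ B := by rw [hf, hF, Matrix.mulVecLin_mul]
    have hAA : A ∘ₗ A = 0 := by rw [hA, ← Matrix.mulVecLin_mul, hZ1, Matrix.mulVecLin_zero]
    have hBB : B ∘ₗ B = 0 := by rw [hB, ← Matrix.mulVecLin_mul, hZ2, Matrix.mulVecLin_zero]
    have hrkA : range A ≤ ker A := LinearMap.range_le_ker_iff.mpr hAA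
    have hrkB : range B ≤ ker B := LinearMap.range_le_ker_iff.mpr hBB
    -- abbreviations
    set d := finrank 𝔽 (R ⊓ N : Submodule 𝔽 (Fin n → 𝔽)) with hd
    set e := finrank 𝔽 (range B ⊓ ker A : Submodule 𝔽 (Fin n → 𝔽)) with he
    -- 1. rank F + e = rank B
    have h1 : F.rank + e = finrank 𝔽 (range B) := by
      have := aux_finrank_map_add_inf_ker A (range B)
      rwa [← LinearMap.range_comp, ← hfAB] at this
    -- 2. nullity F = nullity B + e
    have h2 : finrank 𝔽 (range B ⊓ ker A : Submodule 𝔽 (Fin n → 𝔽)) + finrank 𝔽 (ker B) =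
        nullity F := by
      have h := aux_finrank_map_add_inf_ker B ((ker A).comap B)
      rw [Submodule.map_comap_eq] at h
      have hkk : (ker A).comap B ⊓ ker B = ker B := by
        rw [inf_eq_right]
        intro x hx
        simp only [Submodule.mem_comap, LinearMap.mem_ker] at *
        rw [hx, map_zero]
      rw [hkk] at h
      have : nullity F = finrank 𝔽 ((ker A).comap B) := by
        unfold nullity
        rw [← hf, hfAB, LinearMap.ker_comp]
      rw [this]
      exact h
    -- 3. d ≤ e + d'
    set d' := finrank 𝔽 ((R ⊓ N) ⊓ ker B : Submodule 𝔽 (Fin n → 𝔽)) with hd'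
    have h3 : d ≤ e + d' := by
      have h := aux_finrank_map_add_inf_ker B (R ⊓ N)
      have hle : (R ⊓ N).map B ≤ range B ⊓ ker A := by
        rintro x ⟨y, ⟨hyR, hyN⟩, rfl⟩
        refine ⟨⟨y, rfl⟩, ?_⟩
        have : f y = 0 := hyN
        rw [hfAB] at this
        exact this
      have := Submodule.finrank_mono (t := range B ⊓ ker A) hle
      omega
    -- 4. rank B + d' ≤ nullity B + e
    have h4 : finrank 𝔽 (range B) + d' ≤ finrank 𝔽 (ker B) + e := by
      have h := Submodule.finrank_sup_add_finrank_inf_eq (range B) ((R ⊓ N) ⊓ ker B)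
      have hsub : range B ⊔ ((R ⊓ N) ⊓ ker B) ≤ ker B :=
        sup_le hrkB inf_le_right
      have h5 := Submodule.finrank_mono hsub
      have hle2 : range B ⊓ ((R ⊓ N) ⊓ ker B) ≤ range B ⊓ ker A := by
        rintro x ⟨hxB, ⟨hxR, hxN⟩, hxkB⟩
        refine ⟨hxB, ?_⟩
        have hxRA : x ∈ range A := by
          rw [hR, hfAB, LinearMap.range_comp] at hxR
          exact LinearMap.map_le_range hxR
        exact hrkA hxRA
      have h6 := Submodule.finrank_mono (t := range B ⊓ ker A) hle2
      omega
    -- combine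
    have key : F.rank + d ≤ nullity F := by omega
    have hz : nZero F = nullity F - d := by unfold nZero; rfl
    rw [hz]
    exact Nat.le_sub_of_add_le key
  · -- sufficiency
    intro h
    have hd : finrank 𝔽 (R ⊓ N : Submodule 𝔽 (Fin n → 𝔽)) ≤ nullity F :=
      Submodule.finrank_mono inf_le_right
    have h' : F.rank + finrank 𝔽 (R ⊓ N : Submodule 𝔽 (Fin n → 𝔽)) ≤ finrank 𝔽 N := by
      unfold nZero at h
      rw [← hf, ← hR, ← hN] at h
      have hnull : nullity F = finrank 𝔽 N := rfl
      omega
    -- choose W ≤ N with finrank W = rank F, W ⊓ R = ⊥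
    obtain ⟨W, hWN, hWrank, hWR⟩ := aux_exists_disjoint_subspace N R F.rank (by
      rw [inf_comm] at h' ⊢; exact h')
    -- choose complement C₁ of N
    obtain ⟨C₁, hC₁⟩ := N.exists_isCompl
    have hC₁rank : finrank 𝔽 C₁ = F.rank := by
      have h1 := Submodule.finrank_add_eq_of_isCompl hC₁
      have h2 := LinearMap.finrank_range_add_finrank_ker f
      rw [← hR, ← hN] at h2
      have : F.rank = finrank 𝔽 R := rfl
      omega
    -- iso φ : C₁ ≃ W
    have hiso : finrank 𝔽 C₁ = finrank 𝔽 W := by rw [hC₁rank, hWrank]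
    let φ : C₁ ≃ₗ[𝔽] W := LinearEquiv.ofFinrankEq _ _ hiso
    -- complement W' of W containing R
    obtain ⟨W', hWW', hRW'⟩ := aux_exists_isCompl_le W R hWR
    -- projections
    let π₂ : (Fin n → 𝔽) →ₗ[𝔽] C₁ := C₁.projectionOnto N hC₁.symm
    let π₁ : (Fin n → 𝔽) →ₗ[𝔽] W := W.projectionOnto W' hWW'
    let Z₂l : (Fin n → 𝔽) →ₗ[𝔽] (Fin n → 𝔽) := W.subtype ∘ₗ (φ : C₁ →ₗ[𝔽] W) ∘ₗ π₂
    let Z₁l : (Fin n → 𝔽) →ₗ[𝔽] (Fin n → 𝔽) :=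
      f ∘ₗ C₁.subtype ∘ₗ (φ.symm : W →ₗ[𝔽] C₁) ∘ₗ π₁
    have hZ₂mem : ∀ x, Z₂l x ∈ W := fun x => (φ (π₂ x)).2
    have hZ₁range : ∀ x, Z₁l x ∈ R := fun x => ⟨_, rfl⟩
    have hZ₂sq : Z₂l ∘ₗ Z₂l = 0 := by
      apply LinearMap.ext; intro x
      simp only [Z₂l, π₂, LinearMap.comp_apply, LinearMap.zero_apply, LinearEquiv.coe_coe]
      rw [Submodule.projectionOnto_apply_of_mem_right (x := W.subtype (φ (π₂ x))) hC₁.symm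
        (hWN (hZ₂mem x)), LinearEquiv.map_zero]
      exact (W.subtype).map_zero
    have hZ₁sq : Z₁l ∘ₗ Z₁l = 0 := by
      apply LinearMap.ext; intro x
      simp only [Z₁l, π₁, LinearMap.comp_apply, LinearMap.zero_apply, LinearEquiv.coe_coe]
      rw [Submodule.projectionOnto_apply_of_mem_right hWW'
        (x := f (C₁.subtype (φ.symm (π₁ x)))) (hRW' (hZ₁range x)), LinearEquiv.map_zero,
        (C₁.subtype).map_zero, f.map_zero]
    have hcomp : Z₁l ∘ₗ Z₂l = f := by
      apply LinearMap.ext; intro x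
      simp only [Z₁l, Z₂l, π₁, π₂, LinearMap.comp_apply, LinearEquiv.coe_coe]
      rw [show (W.subtype) (φ (π₂ x)) = ((φ (π₂ x) : W) : Fin n → 𝔽) from rfl,
        Submodule.projectionOnto_apply_left hWW' (φ (π₂ x)),
        LinearEquiv.symm_apply_apply]
      -- now goal : f ↑(π₂ x) = f x
      have hx : (N.projectionOnto C₁ hC₁ x : Fin n → 𝔽) + (π₂ x : Fin n → 𝔽) = x :=
        Submodule.projection_add_projection_eq_self hC₁ x
      have hker : f ((N.projectionOnto C₁ hC₁ x : Fin n → 𝔽)) = 0 :=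
        (N.projectionOnto C₁ hC₁ x).2
      calc f ((C₁.subtype) (π₂ x))
          = f ((N.projectionOnto C₁ hC₁ x : Fin n → 𝔽)) + f ((π₂ x : Fin n → 𝔽)) := by
            rw [hker, zero_add]; rfl
        _ = f x := by rw [← map_add, hx]
    refine ⟨LinearMap.toMatrix' Z₁l, LinearMap.toMatrix' Z₂l, ?_, ?_, ?_⟩
    · have : F = LinearMap.toMatrix' f := by
        rw [hf, ← Matrix.toLin'_apply', LinearMap.toMatrix'_toLin']
      rw [this, ← hcomp, LinearMap.toMatrix'_comp]
    · rw [← LinearMap.toMatrix'_comp, hZ₁sq, LinearEquiv.map_zero]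
    · rw [← LinearMap.toMatrix'_comp, hZ₂sq, LinearEquiv.map_zero]
end

section
/- Let F = Z₁·Z₂ be an n×n matrix over a field 𝔽 where Z₁² = Z₂² = 0. Then dim(R(F) ∩ N(F)) ≤ n(F) − r(F). -/
open Matrix

set_option synthInstance.maxHeartbeats 1000000 in
/-- If `F = Z₁ Z₂` with `Z₁² = Z₂² = 0`, then `dim(R(F) ∩ N(F)) ≤ n(F) − r(F)`. -/
theorem stmt14 {𝔽 : Type*} [Field 𝔽] {n : ℕ} (F Z₁ Z₂ : Matrix (Fin n) (Fin n) 𝔽)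
    (hF : F = Z₁ * Z₂) (hZ₁ : Z₁ * Z₁ = 0) (hZ₂ : Z₂ * Z₂ = 0) :
    Module.finrank 𝔽
        (LinearMap.range F.mulVecLin ⊓ LinearMap.ker F.mulVecLin :
          Submodule 𝔽 (Fin n → 𝔽)) ≤
      nullity F - F.rank := by
  classical
  set f := Z₁.mulVecLin with hf
  set g := Z₂.mulVecLin with hg
  have hFlin : F.mulVecLin = f ∘ₗ g := by rw [hF, Matrix.mulVecLin_mul]
  -- abbreviations
  set R : Submodule 𝔽 (Fin n → 𝔽) := LinearMap.range F.mulVecLin with hR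
  set N : Submodule 𝔽 (Fin n → 𝔽) := LinearMap.ker F.mulVecLin with hN
  set p : Submodule 𝔽 (Fin n → 𝔽) := LinearMap.range g with hp
  -- R ≤ range f ≤ ker f
  have hrangef_ker : LinearMap.range f ≤ LinearMap.ker f := by
    intro x hx
    obtain ⟨y, rfl⟩ := hx
    simp [hf, LinearMap.mem_ker, Matrix.mulVecLin_apply, Matrix.mulVec_mulVec, hZ₁]
  have hR_le_rangef : R ≤ LinearMap.range f := by
    rw [hR, hFlin]
    exact LinearMap.range_comp_le_range g f
  have hR_le_kerf : R ≤ LinearMap.ker f := hR_le_rangef.trans hrangef_ker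
  -- p = range g ≤ ker g ≤ N
  have hp_le_N : p ≤ N := by
    intro x hx
    obtain ⟨y, rfl⟩ := hx
    simp only [hN, LinearMap.mem_ker, hFlin, LinearMap.comp_apply]
    have hgg : g (g y) = 0 := by
      simp [hg, Matrix.mulVecLin_apply, Matrix.mulVec_mulVec, hZ₂]
    rw [hgg]
    simp
  -- rank-nullity for f restricted to p
  have hmap : Submodule.map f p = R := by
    rw [hR, hFlin, LinearMap.range_comp]
  have hrest := LinearMap.finrank_range_add_finrank_ker (f.domRestrict p)
  have hrange_rest : Module.finrank 𝔽 (LinearMap.range (f.domRestrict p)) =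
      Module.finrank 𝔽 R := by
    rw [LinearMap.range_domRestrict, hmap]
  have hker_rest : Module.finrank 𝔽 (LinearMap.ker (f.domRestrict p)) =
      Module.finrank 𝔽 (p ⊓ LinearMap.ker f : Submodule 𝔽 (Fin n → 𝔽)) := by
    have h1 : LinearMap.ker (f.domRestrict p)
        = Submodule.comap p.subtype (p ⊓ LinearMap.ker f) := by
      rw [LinearMap.ker_domRestrict, Submodule.comap_inf]
      simp
    rw [h1]
    exact (Submodule.comapSubtypeEquivOfLe
      (inf_le_left : p ⊓ LinearMap.ker f ≤ p)).finrank_eq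
  -- Fact A : finrank R + finrank (p ⊓ ker f) = finrank p
  have factA : Module.finrank 𝔽 R +
      Module.finrank 𝔽 (p ⊓ LinearMap.ker f : Submodule 𝔽 (Fin n → 𝔽)) =
      Module.finrank 𝔽 p := by
    rw [← hrange_rest, ← hker_rest]
    exact hrest
  -- Fact B : finrank (R ⊓ p) ≤ finrank (p ⊓ ker f)
  have factB : Module.finrank 𝔽 (R ⊓ p : Submodule 𝔽 (Fin n → 𝔽)) ≤
      Module.finrank 𝔽 (p ⊓ LinearMap.ker f : Submodule 𝔽 (Fin n → 𝔽)) :=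
    Submodule.finrank_mono (le_inf inf_le_right (inf_le_left.trans hR_le_kerf))
  -- sup inf formula for R and p
  have hsup1 := Submodule.finrank_sup_add_finrank_inf_eq R p
  -- Fact C : 2 * finrank R ≤ finrank (R ⊔ p)
  have factC : 2 * Module.finrank 𝔽 R ≤
      Module.finrank 𝔽 (R ⊔ p : Submodule 𝔽 (Fin n → 𝔽)) := by omega
  -- Fact D
  have factD : Module.finrank 𝔽 (R ⊔ p : Submodule 𝔽 (Fin n → 𝔽)) ≤
      Module.finrank 𝔽 (R ⊔ N : Submodule 𝔽 (Fin n → 𝔽)) :=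
    Submodule.finrank_mono (sup_le_sup_left hp_le_N R)
  -- Fact E
  have factE := Submodule.finrank_sup_add_finrank_inf_eq R N
  have hrank : F.rank = Module.finrank 𝔽 R := rfl
  have hnull : nullity F = Module.finrank 𝔽 N := rfl
  rw [hrank, hnull]
  omega
end

section
/- Let G = A₁·A₂⋯A_m be a product of n×n matrices over a field 𝔽 where each Aᵢ is either idempotent or square-zero, and let σ be a permutation of {1, …, m}. Then there exist n×n matrices B₁, …, B_m over 𝔽 such that the product B₁·B₂⋯B_m is similar to G, and for each i the matrix Bᵢ is idempotent if A_{σ(i)} is idempotent, Bᵢ is square-zero if A_{σ(i)} is square-zero, and n(Bᵢ) = n(A_{σ(i)}). -/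
open Matrix

open Polynomial

lemma exists_summand_form {𝔽 : Type*} [Field 𝔽] (q : 𝔽[X]) (hq : q ≠ 0) :
    ∃ β : (𝔽[X] ⧸ (𝔽[X] ∙ q)) → (𝔽[X] ⧸ (𝔽[X] ∙ q)) → 𝔽,
      (∀ u v w, β (u + v) w = β u w + β v w) ∧
      (∀ u v w, β u (v + w) = β u v + β u w) ∧
      (∀ (a : 𝔽) u v, β ((C a) • u) v = a * β u v) ∧
      (∀ (a : 𝔽) u v, β u ((C a) • v) = a * β u v) ∧
      (∀ u v, β ((X : 𝔽[X]) • u) v = β u ((X : 𝔽[X]) • v)) ∧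
      (∀ x, (∀ u, β u x = 0) → x = 0) := by
  classical
  set N : Submodule 𝔽[X] 𝔽[X] := 𝔽[X] ∙ q with hN
  set qm : 𝔽[X] := q * C (q.leadingCoeff)⁻¹ with hqm
  have hm : qm.Monic := monic_mul_leadingCoeff_inv hq
  set d : ℕ := q.natDegree with hd
  have hdm : qm.natDegree = d := by
    rw [hqm, natDegree_mul_C (inv_ne_zero (leadingCoeff_ne_zero.mpr hq))]
  have hmem : ∀ g : 𝔽[X], g ∈ N ↔ qm ∣ g := by
    intro g
    rw [hN, Submodule.mem_span_singleton]
    constructor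
    · rintro ⟨a, rfl⟩
      exact Dvd.dvd.mul_left ⟨C q.leadingCoeff, by
        rw [hqm, mul_assoc, ← C_mul, inv_mul_cancel₀ (leadingCoeff_ne_zero.mpr hq), C_1,
          mul_one]⟩ a
    · rintro ⟨a, rfl⟩
      exact ⟨a * C (q.leadingCoeff)⁻¹, by rw [smul_eq_mul, hqm]; ring⟩
  set c₀ : 𝔽[X] → 𝔽 := fun g => (g %ₘ qm).coeff (d - 1) with hc₀
  have hkill : ∀ g : 𝔽[X], qm ∣ g → c₀ g = 0 := by
    intro g hg
    simp only [hc₀, (modByMonic_eq_zero_iff_dvd hm).2 hg, coeff_zero]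
  have hadd : ∀ g h : 𝔽[X], c₀ (g + h) = c₀ g + c₀ h := by
    intro g h; simp only [hc₀, add_modByMonic, coeff_add]
  set β : (𝔽[X] ⧸ N) → (𝔽[X] ⧸ N) → 𝔽 :=
    fun u v => c₀ (Quotient.out u * Quotient.out v) with hβ
  have hout : ∀ u : 𝔽[X] ⧸ N, Submodule.Quotient.mk (Quotient.out u) = u := by
    intro u; exact Quotient.out_eq u
  have hmk : ∀ g h : 𝔽[X], β (Submodule.Quotient.mk g) (Submodule.Quotient.mk h) = c₀ (g * h) := by
    intro g h
    set g' := Quotient.out (Submodule.Quotient.mk g : 𝔽[X] ⧸ N) with hg'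
    set h' := Quotient.out (Submodule.Quotient.mk h : 𝔽[X] ⧸ N) with hh'
    have h1 : qm ∣ g' - g := by
      rw [← hmem]
      exact (Submodule.Quotient.eq N).mp (hout _)
    have h2 : qm ∣ h' - h := by
      rw [← hmem]
      exact (Submodule.Quotient.eq N).mp (hout _)
    have key : g' * h' = g * h + ((g' - g) * h' + g * (h' - h)) := by ring
    rw [hβ]
    simp only
    rw [← hg', ← hh', key, hadd, hadd, hkill _ (Dvd.dvd.mul_right h1 h'),
      hkill _ (Dvd.dvd.mul_left h2 g), add_zero, add_zero]
  have msurj := Submodule.Quotient.mk_surjective N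
  refine ⟨β, ?_, ?_, ?_, ?_, ?_, ?_⟩
  · intro u v w
    obtain ⟨g, rfl⟩ := msurj u; obtain ⟨g₂, rfl⟩ := msurj v; obtain ⟨h, rfl⟩ := msurj w
    rw [← Submodule.Quotient.mk_add, hmk, hmk, hmk, ← hadd, add_mul]
  · intro u v w
    obtain ⟨g, rfl⟩ := msurj u; obtain ⟨h, rfl⟩ := msurj v; obtain ⟨h₂, rfl⟩ := msurj w
    rw [← Submodule.Quotient.mk_add, hmk, hmk, hmk, ← hadd, mul_add]
  · intro a u v
    obtain ⟨g, rfl⟩ := msurj u; obtain ⟨h, rfl⟩ := msurj v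
    have : (C a) • (Submodule.Quotient.mk g : 𝔽[X] ⧸ N) = Submodule.Quotient.mk (C a * g) := by
      rw [← Submodule.Quotient.mk_smul]; rw [smul_eq_mul]
    rw [this, hmk, hmk]
    have : C a * g * h = a • (g * h) := by rw [smul_eq_C_mul]; ring
    rw [this, hc₀]
    simp only [smul_modByMonic, coeff_smul, smul_eq_mul]
  · intro a u v
    obtain ⟨g, rfl⟩ := msurj u; obtain ⟨h, rfl⟩ := msurj v
    have : (C a) • (Submodule.Quotient.mk h : 𝔽[X] ⧸ N) = Submodule.Quotient.mk (C a * h) := by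
      rw [← Submodule.Quotient.mk_smul]; rw [smul_eq_mul]
    rw [this, hmk, hmk]
    have : g * (C a * h) = a • (g * h) := by rw [smul_eq_C_mul]; ring
    rw [this, hc₀]
    simp only [smul_modByMonic, coeff_smul, smul_eq_mul]
  · intro u v
    obtain ⟨g, rfl⟩ := msurj u; obtain ⟨h, rfl⟩ := msurj v
    have h1 : (X : 𝔽[X]) • (Submodule.Quotient.mk g : 𝔽[X] ⧸ N) = Submodule.Quotient.mk (X * g) := by
      rw [← Submodule.Quotient.mk_smul]; rw [smul_eq_mul]
    have h2 : (X : 𝔽[X]) • (Submodule.Quotient.mk h : 𝔽[X] ⧸ N) = Submodule.Quotient.mk (X * h) := by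
      rw [← Submodule.Quotient.mk_smul]; rw [smul_eq_mul]
    rw [h1, h2, hmk, hmk]
    ring_nf
  · intro x hx
    obtain ⟨h, rfl⟩ := msurj x
    by_cases hd0 : d = 0
    · -- qm = 1, N = ⊤
      have : qm = 1 := by
        have := hm.natDegree_eq_zero.mp (by rw [hdm, hd0])
        exact this
      rw [Submodule.Quotient.mk_eq_zero]
      rw [hmem]
      exact this ▸ one_dvd h
    · set h' : 𝔽[X] := h %ₘ qm with hh'
      have hmkh : (Submodule.Quotient.mk h' : 𝔽[X] ⧸ N) = Submodule.Quotient.mk h := by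
        rw [Submodule.Quotient.eq, hmem]
        have := modByMonic_add_div h qm
        exact ⟨-(h /ₘ qm), by rw [hh']; linear_combination this⟩
      by_contra hne
      have hne' : h' ≠ 0 := by
        intro h0
        apply hne
        rw [← hmkh, h0, Submodule.Quotient.mk_eq_zero]
        exact N.zero_mem
      set k : ℕ := h'.natDegree with hk
      have hkd : k < d := by
        have := degree_modByMonic_lt h hm
        rw [← hh'] at this
        have := natDegree_lt_natDegree hne' this
        rwa [hdm] at this
      have hc : β (Submodule.Quotient.mk (X ^ (d - 1 - k))) (Submodule.Quotient.mk h) = h'.leadingCoeff := by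
        rw [← hmkh, hmk]
        have h0 : X ^ (d - 1 - k) * h' ≠ 0 :=
          mul_ne_zero (pow_ne_zero _ X_ne_zero) hne'
        have hdeg : (X ^ (d - 1 - k) * h').degree < qm.degree := by
          rw [degree_eq_natDegree h0, degree_eq_natDegree hm.ne_zero]
          have h1 : (X ^ (d - 1 - k) * h').natDegree = (d - 1 - k) + k := by
            rw [natDegree_mul (pow_ne_zero _ X_ne_zero) hne', natDegree_X_pow]
          rw [h1, hdm]
          exact_mod_cast by omega
        rw [hc₀]
        simp only [(modByMonic_eq_self_iff hm).mpr hdeg]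
        rw [mul_comm, coeff_mul_X_pow', if_pos (by omega)]
        have h2 : d - 1 - (d - 1 - k) = k := by omega
        rw [h2, hk]
        exact coeff_natDegree
      rw [hx _] at hc
      exact (leadingCoeff_ne_zero.mpr hne') hc.symm

open Matrix DirectSum in
theorem exists_transpose_conj {𝔽 : Type*} [Field 𝔽] {n : ℕ} (M : Matrix (Fin n) (Fin n) 𝔽) :
    ∃ H : Matrix (Fin n) (Fin n) 𝔽, IsUnit H ∧ Mᵀ * H = H * M := by
  classical
  set φ : (Fin n → 𝔽) →ₗ[𝔽] (Fin n → 𝔽) := Matrix.toLin' M with hφ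
  have haev : Polynomial.aeval φ M.charpoly = 0 := by
    have h1 := Polynomial.aeval_algHom_apply
      (Matrix.toLinAlgEquiv' (R := 𝔽) (n := Fin n)).toAlgHom M M.charpoly
    have h2 : (Matrix.toLinAlgEquiv' (R := 𝔽) (n := Fin n)).toAlgHom M = φ := rfl
    rw [h2] at h1
    rw [h1, M.aeval_self_charpoly, map_zero]
  have htor : Module.IsTorsion 𝔽[X] (Module.AEval' φ) := by
    intro z
    refine ⟨⟨M.charpoly, mem_nonZeroDivisors_of_ne_zero M.charpoly_monic.ne_zero⟩, ?_⟩
    show (M.charpoly : 𝔽[X]) • z = 0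
    apply (Module.AEval.of 𝔽 (Fin n → 𝔽) φ).symm.injective
    rw [Module.AEval.of_symm_smul, map_zero, haev, zero_smul]
  obtain ⟨ι, fι, p, hp, e, ⟨Φ⟩⟩ :=
    Module.equiv_directSum_of_isTorsion (R := 𝔽[X]) (M := Module.AEval' φ) htor
  choose β βaddl βaddr βsmull βsmulr βswap βnd using
    fun i : ι => exists_summand_form (p i ^ e i) (pow_ne_zero _ (hp i).ne_zero)
  have βzl : ∀ i y, β i 0 y = 0 := by
    intro i y
    have h := βaddl i 0 0 y
    rw [add_zero] at h
    have h2 : β i 0 y + 0 = β i 0 y + β i 0 y := by rw [add_zero]; exact h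
    exact (add_left_cancel h2).symm
  set S : (⨁ i : ι, (𝔽[X] ⧸ (𝔽[X] ∙ p i ^ e i))) → (⨁ i : ι, (𝔽[X] ⧸ (𝔽[X] ∙ p i ^ e i))) → 𝔽 :=
    fun w₁ w₂ => ∑ i : ι, β i (w₁ i) (w₂ i) with hS
  set oF := Module.AEval.of 𝔽 (Fin n → 𝔽) φ with hoF
  set ε : (Fin n → 𝔽) → (Fin n → 𝔽) → 𝔽 := fun u v => S (Φ (oF u)) (Φ (oF v)) with hε
  have εaddl : ∀ u v w, ε (u + v) w = ε u w + ε v w := by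
    intro u v w
    simp only [hε, hS, map_add, DirectSum.add_apply]
    rw [← Finset.sum_add_distrib]
    exact Finset.sum_congr rfl fun i _ => βaddl i _ _ _
  have εaddr : ∀ u v w, ε u (v + w) = ε u v + ε u w := by
    intro u v w
    simp only [hε, hS, map_add, DirectSum.add_apply]
    rw [← Finset.sum_add_distrib]
    exact Finset.sum_congr rfl fun i _ => βaddr i _ _ _
  have εsmull : ∀ (a : 𝔽) u v, ε (a • u) v = a * ε u v := by
    intro a u v
    have h0 : oF (a • u) = Polynomial.C a • oF u := by
      rw [_root_.map_smul, Module.AEval.C_smul]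
    simp only [hε, hS, h0, _root_.map_smul]
    rw [Finset.mul_sum]
    exact Finset.sum_congr rfl fun i _ => by rw [DirectSum.smul_apply, βsmull]
  have εsmulr : ∀ (a : 𝔽) u v, ε u (a • v) = a * ε u v := by
    intro a u v
    have h0 : oF (a • v) = Polynomial.C a • oF v := by
      rw [_root_.map_smul, Module.AEval.C_smul]
    simp only [hε, hS, h0, _root_.map_smul]
    rw [Finset.mul_sum]
    exact Finset.sum_congr rfl fun i _ => by rw [DirectSum.smul_apply, βsmulr]
  have εswap : ∀ u v, ε (M *ᵥ u) v = ε u (M *ᵥ v) := by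
    intro u v
    have h0 : ∀ w : Fin n → 𝔽, oF (M *ᵥ w) = (X : 𝔽[X]) • oF w := by
      intro w
      have h1 : M *ᵥ w = φ w := (Matrix.toLin'_apply M w).symm
      rw [h1, Module.AEval.X_smul_of]
      rfl
    simp only [hε, hS, h0, _root_.map_smul]
    exact Finset.sum_congr rfl fun i _ => by
      rw [DirectSum.smul_apply, DirectSum.smul_apply, βswap]
  have εnd : ∀ x, (∀ u, ε u x = 0) → x = 0 := by
    intro x hx
    have hsurj : Function.Surjective (fun u : Fin n → 𝔽 => Φ (oF u)) :=
      Φ.surjective.comp oF.surjective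
    have hS0 : ∀ w, S w (Φ (oF x)) = 0 := by
      intro w
      obtain ⟨u, rfl⟩ := hsurj w
      exact hx u
    have hΦ0 : Φ (oF x) = 0 := by
      apply DFinsupp.ext
      intro i
      apply βnd i
      intro u
      have h := hS0 (DirectSum.of _ i u)
      simp only [hS] at h
      rw [Finset.sum_eq_single i (fun j _ hji => by
        rw [DirectSum.of_eq_of_ne _ _ _ hji, βzl]) (fun hni => absurd (Finset.mem_univ i) hni)] at h
      rwa [DirectSum.of_eq_same] at h
    exact oF.map_eq_zero_iff.mp (Φ.map_eq_zero_iff.mp hΦ0)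
  have ε0l : ∀ v, ε 0 v = 0 := by
    intro v
    have h := εsmull 0 0 v
    rwa [zero_smul, zero_mul] at h
  have εsuml : ∀ (s : Finset (Fin n)) (c : Fin n → 𝔽) (u : Fin n → (Fin n → 𝔽)) (v),
      ε (∑ k ∈ s, c k • u k) v = ∑ k ∈ s, c k * ε (u k) v := by
    intro s
    induction s using Finset.induction_on with
    | empty => intro c u v; simpa using ε0l v
    | insert _ _ hk ih =>
      intro c u v
      rw [Finset.sum_insert hk, Finset.sum_insert hk, εaddl, εsmull, ih]
  have εsumr : ∀ (s : Finset (Fin n)) (c : Fin n → 𝔽) (u : Fin n → (Fin n → 𝔽)) (v),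
      ε v (∑ k ∈ s, c k • u k) = ∑ k ∈ s, c k * ε v (u k) := by
    intro s
    induction s using Finset.induction_on with
    | empty =>
      intro c u v
      have h := εsmulr 0 v 0
      rw [zero_smul, zero_mul] at h
      simpa using h
    | insert _ _ hk ih =>
      intro c u v
      rw [Finset.sum_insert hk, Finset.sum_insert hk, εaddr, εsmulr, ih]
  set δ : Fin n → Fin n → 𝔽 := fun i => Pi.single i 1 with hδ
  have hdecomp : ∀ x : Fin n → 𝔽, (∑ k, x k • δ k) = x := by
    intro x
    have h1 : ∀ k, x k • δ k = Pi.single k (x k) := by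
      intro k
      rw [hδ]
      rw [← Pi.single_smul, smul_eq_mul, mul_one]
    simp_rw [h1]
    exact Finset.univ_sum_single x
  have hMs : ∀ (i : Fin n), M *ᵥ δ i = ∑ k, M k i • δ k := by
    intro i
    rw [hdecomp (fun r => M r i)]
    funext r
    simp [hδ, Matrix.mulVec_single]
  refine ⟨Matrix.of (fun i j => ε (δ i) (δ j)), ?_, ?_⟩
  · rw [← Matrix.mulVec_injective_iff_isUnit]
    intro x y hxy
    set z : Fin n → 𝔽 := x - y with hz
    have hz0 : Matrix.of (fun i j => ε (δ i) (δ j)) *ᵥ z = 0 := by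
      rw [hz, Matrix.mulVec_sub, hxy, sub_self]
    have hsingle : ∀ i, ε (δ i) z = 0 := by
      intro i
      have h0 := congrFun hz0 i
      have h1 : (Matrix.of (fun i j => ε (δ i) (δ j)) *ᵥ z) i
          = ∑ j, z j * ε (δ i) (δ j) := by
        rw [Matrix.mulVec, dotProduct]
        exact Finset.sum_congr rfl fun j _ => by rw [Matrix.of_apply, mul_comm]
      rw [h1] at h0
      have h2 : ε (δ i) z = ∑ j, z j * ε (δ i) (δ j) := by
        conv_lhs => rw [← hdecomp z]
        rw [εsumr]
      rw [h2, h0]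
      rfl
    have hεz : ∀ u, ε u z = 0 := by
      intro u
      have h2 : ε u z = ∑ k, u k * ε (δ k) z := by
        conv_lhs => rw [← hdecomp u]
        rw [εsuml]
      rw [h2]
      simp [hsingle]
    have := εnd z hεz
    rw [hz] at this
    exact sub_eq_zero.mp this
  · ext i j
    rw [Matrix.mul_apply, Matrix.mul_apply]
    have lhs : ∑ k, Mᵀ i k * (Matrix.of (fun i j => ε (δ i) (δ j))) k j
        = ε (M *ᵥ δ i) (δ j) := by
      rw [hMs, εsuml]
      exact Finset.sum_congr rfl fun k _ => by rw [Matrix.transpose_apply, Matrix.of_apply]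
    have rhs : ∑ k, (Matrix.of (fun i j => ε (δ i) (δ j))) i k * M k j
        = ε (δ i) (M *ᵥ δ j) := by
      rw [hMs, εsumr]
      exact Finset.sum_congr rfl fun k _ => by rw [Matrix.of_apply, mul_comm]
    rw [lhs, rhs, εswap]

lemma rank_add_nullity {𝔽 : Type*} [Field 𝔽] {n : ℕ} (A : Matrix (Fin n) (Fin n) 𝔽) :
    A.rank + nullity A = n := by
  have h := LinearMap.finrank_range_add_finrank_ker A.mulVecLin
  rw [Module.finrank_fin_fun] at h
  unfold nullity Matrix.rank
  exact h

def MatRel {𝔽 : Type*} [Field 𝔽] {n : ℕ} (X Y : Matrix (Fin n) (Fin n) 𝔽) : Prop :=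
  (Y * Y = Y → X * X = X) ∧ (Y * Y = 0 → X * X = 0) ∧ nullity X = nullity Y

lemma MatRel.rfl {𝔽 : Type*} [Field 𝔽] {n : ℕ} {X : Matrix (Fin n) (Fin n) 𝔽} :
    MatRel X X := ⟨id, id, Eq.refl _⟩

lemma MatRel.trans {𝔽 : Type*} [Field 𝔽] {n : ℕ}
    {X Y Z : Matrix (Fin n) (Fin n) 𝔽} (h1 : MatRel X Y) (h2 : MatRel Y Z) : MatRel X Z :=
  ⟨fun h => h1.1 (h2.1 h), fun h => h1.2.1 (h2.2.1 h), h1.2.2.trans h2.2.2⟩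

theorem pair_swap {𝔽 : Type*} [Field 𝔽] {n : ℕ} (A B : Matrix (Fin n) (Fin n) 𝔽) :
    ∃ A' B' : Matrix (Fin n) (Fin n) 𝔽, B' * A' = A * B ∧ MatRel A' A ∧ MatRel B' B := by
  obtain ⟨H, hu, hH⟩ := exists_transpose_conj (A * B)
  have hud : IsUnit H.det := (Matrix.isUnit_iff_isUnit_det H).mp hu
  have hmul : ∀ X Y : Matrix (Fin n) (Fin n) 𝔽,
      (H⁻¹ * Xᵀ * H) * (H⁻¹ * Yᵀ * H) = H⁻¹ * (Y * X)ᵀ * H := by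
    intro X Y
    rw [Matrix.transpose_mul]
    simp only [Matrix.mul_assoc]
    rw [Matrix.mul_nonsing_inv_cancel_left _ _ hud]
  have hnul : ∀ X : Matrix (Fin n) (Fin n) 𝔽, nullity (H⁻¹ * Xᵀ * H) = nullity X := by
    intro X
    have hr : (H⁻¹ * Xᵀ * H).rank = X.rank := by
      rw [Matrix.rank_mul_eq_left_of_isUnit_det _ _ hud,
        Matrix.rank_mul_eq_right_of_isUnit_det _ _ (Matrix.isUnit_nonsing_inv_det _ hud),
        Matrix.rank_transpose]
    have e1 := rank_add_nullity (H⁻¹ * Xᵀ * H)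
    have e2 := rank_add_nullity X
    omega
  have hrel : ∀ X : Matrix (Fin n) (Fin n) 𝔽, MatRel (H⁻¹ * Xᵀ * H) X := by
    intro X
    refine ⟨fun h => ?_, fun h => ?_, hnul X⟩
    · rw [hmul, h]
    · rw [hmul, h, Matrix.transpose_zero, Matrix.mul_zero, Matrix.zero_mul]
  refine ⟨H⁻¹ * Aᵀ * H, H⁻¹ * Bᵀ * H, ?_, hrel A, hrel B⟩
  rw [hmul]
  rw [Matrix.mul_assoc, hH, ← Matrix.mul_assoc, Matrix.nonsing_inv_mul _ hud, Matrix.one_mul]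

theorem perm_list {𝔽 : Type*} [Field 𝔽] {n : ℕ}
    {c c₂ : List (Matrix (Fin n) (Fin n) 𝔽)} (hperm : c.Perm c₂) :
    ∀ l, List.Forall₂ MatRel l c → ∃ l', l'.prod = l.prod ∧ List.Forall₂ MatRel l' c₂ := by
  induction hperm with
  | nil => exact fun l hl => ⟨l, rfl, hl⟩
  | cons x h ih =>
    intro l hl
    cases hl with
    | cons ha ht =>
      obtain ⟨t', ht', htm⟩ := ih _ ht
      exact ⟨_ :: t', by rw [List.prod_cons, List.prod_cons, ht'], List.Forall₂.cons ha htm⟩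
  | swap x y t =>
    intro l hl
    match l, hl with
    | a :: b :: s, List.Forall₂.cons ha (List.Forall₂.cons hb hs) =>
      obtain ⟨a', b', hprod, hra, hrb⟩ := pair_swap a b
      refine ⟨b' :: a' :: s, ?_, List.Forall₂.cons (hrb.trans hb)
        (List.Forall₂.cons (hra.trans ha) hs)⟩
      rw [List.prod_cons, List.prod_cons, List.prod_cons, List.prod_cons,
        ← Matrix.mul_assoc, hprod, Matrix.mul_assoc]
  | trans h1 h2 ih1 ih2 =>
    intro l hl
    obtain ⟨l1, hp1, hm1⟩ := ih1 l hl
    obtain ⟨l2, hp2, hm2⟩ := ih2 l1 hm1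
    exact ⟨l2, hp2.trans hp1, hm2⟩

/-- Up to similarity, the factors of a product of idempotent and square-zero matrices
may be reordered arbitrarily while preserving the type and nullity of each factor. -/
theorem stmt15 {𝔽 : Type*} [Field 𝔽] {n m : ℕ}
    (A : Fin m → Matrix (Fin n) (Fin n) 𝔽)
    (hA : ∀ i, A i * A i = A i ∨ A i * A i = 0) (σ : Equiv.Perm (Fin m)) :
    ∃ B : Fin m → Matrix (Fin n) (Fin n) 𝔽,
      (∃ P : Matrix (Fin n) (Fin n) 𝔽, IsUnit P ∧
        (List.ofFn B).prod = P⁻¹ * (List.ofFn A).prod * P) ∧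
      ∀ i, (A (σ i) * A (σ i) = A (σ i) → B i * B i = B i) ∧
        (A (σ i) * A (σ i) = 0 → B i * B i = 0) ∧
        nullity (B i) = nullity (A (σ i)) := by
  classical
  have hperm : (List.ofFn A).Perm (List.ofFn (A ∘ σ)) := (σ.ofFn_comp_perm A).symm
  obtain ⟨l', hprod, hmatch⟩ := perm_list hperm (List.ofFn A)
    (List.forall₂_same.mpr fun x _ => MatRel.rfl)
  have hlen : l'.length = m := hmatch.length_eq.trans (by rw [List.length_ofFn])
  set B : Fin m → Matrix (Fin n) (Fin n) 𝔽 :=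
    fun i => l'.get (Fin.cast hlen.symm i) with hB
  have hofn : List.ofFn B = l' := by
    apply List.ext_get
    · rw [List.length_ofFn, hlen]
    · intro i h1 h2
      rw [List.get_ofFn]
      rfl
  have hget : ∀ i : Fin m, MatRel (B i) (A (σ i)) := by
    intro i
    obtain ⟨hl2, hg⟩ := List.forall₂_iff_get.mp hmatch
    have h1 : (i : ℕ) < l'.length := by omega
    have h2 : (i : ℕ) < (List.ofFn (A ∘ σ)).length := by rw [List.length_ofFn]; omega
    have := hg i h1 h2
    have e1 : l'.get ⟨(i : ℕ), h1⟩ = B i := rfl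
    have e2 : (List.ofFn (A ∘ σ)).get ⟨(i : ℕ), h2⟩ = A (σ i) := by
      rw [List.get_ofFn]
      rfl
    rwa [e1, e2] at this
  refine ⟨B, ⟨1, isUnit_one, ?_⟩, fun i => hget i⟩
  rw [inv_one, Matrix.one_mul, Matrix.mul_one, hofn, hprod]
end

section
/- Let A, B be n×n matrices over a field 𝔽. Then the product A·B is similar to the matrix Bᵀ·Aᵀ (the transpose of A·B). -/
open Matrix Polynomial Module

universe u

section Aux

open Polynomial

theorem exists_bilin_adjoinRoot {𝔽 : Type*} [Field 𝔽] {q : 𝔽[X]} (hq : q.Monic) :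
    ∃ b : AdjoinRoot q →ₗ[𝔽] AdjoinRoot q →ₗ[𝔽] 𝔽,
      (∀ a, (∀ c, b a c = 0) → a = 0) ∧
      (∀ (r a c : AdjoinRoot q), b (r * a) c = b a (r * c)) := by
  classical
  set d := q.natDegree with hd
  set φ : AdjoinRoot q →ₗ[𝔽] 𝔽 :=
    (lcoeff 𝔽 (d - 1)).comp (AdjoinRoot.modByMonicHom hq) with hφ
  refine ⟨(LinearMap.mul 𝔽 (AdjoinRoot q)).compr₂ φ, ?_, ?_⟩
  · intro a h
    by_cases hd0 : d = 0
    · have hq1 : q = 1 := hq.natDegree_eq_zero.mp hd0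
      obtain ⟨g, rfl⟩ := AdjoinRoot.mk_surjective a
      rw [AdjoinRoot.mk_eq_zero, hq1]
      exact one_dvd _
    · by_contra ha
      set g : 𝔽[X] := AdjoinRoot.modByMonicHom hq a with hg
      have hmk : AdjoinRoot.mk q g = a := AdjoinRoot.mk_leftInverse hq a
      have hgne : g ≠ 0 := by
        intro h0
        rw [h0, map_zero] at hmk
        exact ha hmk.symm
      have hdeg : g.degree < q.degree := by
        obtain ⟨a₀, rfl⟩ := AdjoinRoot.mk_surjective a
        rw [hg, AdjoinRoot.modByMonicHom_mk]
        exact degree_modByMonic_lt a₀ hq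
      have hk : g.natDegree ≤ d - 1 := by
        have := (natDegree_lt_natDegree_iff hgne).mpr hdeg
        omega
      have hc := h (AdjoinRoot.mk q (X ^ (d - 1 - g.natDegree)))
      rw [LinearMap.compr₂_apply, LinearMap.mul_apply', ← hmk, ← _root_.map_mul] at hc
      have hself : (g * X ^ (d - 1 - g.natDegree)) %ₘ q = g * X ^ (d - 1 - g.natDegree) := by
        rw [Polynomial.modByMonic_eq_self_iff hq, degree_mul, degree_X_pow,
          degree_eq_natDegree hgne, degree_eq_natDegree hq.ne_zero, ← Nat.cast_add, Nat.cast_lt]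
        omega
      rw [hφ, LinearMap.comp_apply, AdjoinRoot.modByMonicHom_mk, hself, lcoeff_apply,
        coeff_mul_X_pow', if_pos (by omega)] at hc
      have : d - 1 - (d - 1 - g.natDegree) = g.natDegree := by omega
      rw [this, coeff_natDegree] at hc
      exact leadingCoeff_ne_zero.mpr hgne hc
  · intro r a c
    simp only [LinearMap.compr₂_apply, LinearMap.mul_apply']
    ring_nf


theorem exists_nondeg_bilin {𝔽 V : Type u} [Field 𝔽] [AddCommGroup V] [Module 𝔽 V]
    [Module.Finite 𝔽 V] (f : V →ₗ[𝔽] V) :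
    ∃ b : V →ₗ[𝔽] V →ₗ[𝔽] 𝔽,
      (∀ x, (∀ y, b x y = 0) → x = 0) ∧ (∀ x y, b (f x) y = b x (f y)) := by
  classical
  have htor : Module.IsTorsion 𝔽[X] (Module.AEval' f) := by
    intro x
    refine ⟨⟨f.charpoly, mem_nonZeroDivisors_of_ne_zero f.charpoly_monic.ne_zero⟩, ?_⟩
    show (f.charpoly : 𝔽[X]) • x = 0
    apply (Module.AEval.of 𝔽 V f).symm.injective
    rw [Module.AEval.of_symm_smul, LinearMap.aeval_self_charpoly]
    simp
  obtain ⟨ι, hι, p, hp, e, ⟨ψ⟩⟩ := Module.equiv_directSum_of_isTorsion.{u,u} htor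
  -- normalize the prime powers to be monic
  set q : ι → 𝔽[X] := fun i => (p i ^ e i) * Polynomial.C (Polynomial.leadingCoeff (p i ^ e i))⁻¹
    with hqdef
  have hqmonic : ∀ i, (q i).Monic := fun i =>
    monic_mul_leadingCoeff_inv (pow_ne_zero _ (hp i).ne_zero)
  have hspan : ∀ i, (𝔽[X] ∙ (p i ^ e i)) = Ideal.span {q i} := by
    intro i
    rw [Ideal.submodule_span_eq]
    exact Ideal.span_singleton_eq_span_singleton.mpr
      (associated_mul_unit_left _ _
        (isUnit_C.mpr (IsUnit.inv (isUnit_iff_ne_zero.mpr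
          (leadingCoeff_ne_zero.mpr (pow_ne_zero _ (hp i).ne_zero)))))).symm
  letI instMod : ∀ i, Module 𝔽[X] (AdjoinRoot (q i)) := fun i =>
    (inferInstance : Module 𝔽[X] (𝔽[X] ⧸ (Ideal.span {q i} : Ideal 𝔽[X])))
  letI instTower : ∀ i, IsScalarTower 𝔽 𝔽[X] (AdjoinRoot (q i)) := fun i =>
    inferInstanceAs (IsScalarTower 𝔽 𝔽[X] (𝔽[X] ⧸ (Ideal.span {q i} : Ideal 𝔽[X])))
  set E : ∀ i, (𝔽[X] ⧸ (𝔽[X] ∙ (p i ^ e i))) ≃ₗ[𝔽[X]] AdjoinRoot (q i) := fun i =>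
    Submodule.quotEquivOfEq (𝔽[X] ∙ (p i ^ e i)) (Ideal.span {q i}) (hspan i) with hE
  set W := DirectSum ι (fun i => AdjoinRoot (q i)) with hW
  set ψ' : Module.AEval' f ≃ₗ[𝔽[X]] W :=
    ψ.trans (DFinsupp.mapRange.linearEquiv E) with hψ'
  set g : V ≃ₗ[𝔽] W :=
    (Module.AEval.of 𝔽 V f).trans (ψ'.restrictScalars 𝔽) with hg
  -- key fact : g intertwines f with X • ·
  have hgf : ∀ v : V, g (f v) = (X : 𝔽[X]) • g v := by
    intro v
    have h1 : Module.AEval.of 𝔽 V f (f v) = (X : 𝔽[X]) • Module.AEval.of 𝔽 V f v :=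
      (Module.AEval.X_smul_of _ _).symm
    rw [hg]
    simp only [LinearEquiv.trans_apply, h1]
    exact map_smul ψ' _ _
  choose b hb1 hb2 using fun i => exists_bilin_adjoinRoot (hqmonic i)
  set π : ∀ i, W →ₗ[𝔽] AdjoinRoot (q i) := fun i =>
    (DirectSum.component 𝔽[X] ι (fun i => AdjoinRoot (q i)) i).restrictScalars 𝔽 with hπ
  set B : W →ₗ[𝔽] W →ₗ[𝔽] 𝔽 := ∑ i, (b i).compl₁₂ (π i) (π i) with hB
  have hBapply : ∀ w w' : W, B w w' = ∑ i, b i (w i) (w' i) := by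
    intro w w'
    rw [hB]
    simp only [LinearMap.sum_apply, LinearMap.compl₁₂_apply, hπ,
      LinearMap.coe_restrictScalars]
    rfl
  -- nondegeneracy of B (via components)
  have hBnd : ∀ w : W, (∀ w' : W, B w w' = 0) → w = 0 := by
    intro w hw
    refine DFinsupp.ext fun i => ?_
    refine hb1 i _ fun c => ?_
    have := hw (DirectSum.lof 𝔽[X] ι (fun i => AdjoinRoot (q i)) i c)
    rw [hBapply] at this
    rw [Finset.sum_eq_single i] at this
    · rwa [DirectSum.lof_apply] at this
    · intro j _ hj
      have hz : (DirectSum.lof 𝔽[X] ι (fun i => AdjoinRoot (q i)) i c) j = 0 := by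
        exact DFinsupp.single_eq_of_ne (by simpa using hj)
      rw [hz, map_zero]
    · intro hi
      exact absurd (Finset.mem_univ i) hi
  -- X-compatibility of B
  have hsmul : ∀ (i : ι) (r : 𝔽[X]) (u : AdjoinRoot (q i)),
      r • u = AdjoinRoot.mk (q i) r * u := by
    intro i r u
    obtain ⟨u₀, rfl⟩ := AdjoinRoot.mk_surjective u
    rw [← _root_.map_mul]
    rfl
  have hBX : ∀ w w' : W, B ((X : 𝔽[X]) • w) w' = B w ((X : 𝔽[X]) • w') := by
    intro w w'
    rw [hBapply, hBapply]
    refine Finset.sum_congr rfl fun i _ => ?_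
    have h1 : ((X : 𝔽[X]) • w) i = (X : 𝔽[X]) • (w i) := rfl
    have h2 : ((X : 𝔽[X]) • w') i = (X : 𝔽[X]) • (w' i) := rfl
    rw [h1, h2, hsmul i X (w i), hsmul i X (w' i)]
    exact hb2 i _ _ _
  -- assemble
  refine ⟨B.compl₁₂ g.toLinearMap g.toLinearMap, ?_, ?_⟩
  · intro x hx
    have : g x = 0 := by
      refine hBnd _ fun w' => ?_
      have := hx (g.symm w')
      simpa using this
    simpa using congrArg g.symm this
  · intro x y
    simp only [LinearMap.compl₁₂_apply, LinearEquiv.coe_coe]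
    rw [hgf, hgf]
    exact hBX _ _


theorem similar_transpose {𝔽 : Type u} [Field 𝔽] {n : ℕ} (M : Matrix (Fin n) (Fin n) 𝔽) :
    ∃ P : Matrix (Fin n) (Fin n) 𝔽, IsUnit P ∧ Mᵀ = P⁻¹ * M * P := by
  obtain ⟨b, hnd, hc⟩ := exists_nondeg_bilin M.mulVecLin
  set P : Matrix (Fin n) (Fin n) 𝔽 := LinearMap.toMatrix₂' 𝔽 b with hP
  have hb : ∀ x y, b x y = x ⬝ᵥ P *ᵥ y := by
    intro x y
    conv_lhs => rw [← Matrix.toLinearMap₂'_toMatrix' (R := 𝔽) b]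
    rw [Matrix.toLinearMap₂'_apply']
  -- Mᵀ * P = P * M
  have key : Mᵀ * P = P * M := by
    have h1 : b.compl₁₂ M.mulVecLin LinearMap.id = b.compl₁₂ LinearMap.id M.mulVecLin := by
      ext x y
      exact hc _ _
    have h2 := congrArg (LinearMap.toMatrix₂' 𝔽) h1
    rwa [LinearMap.toMatrix₂'_compl₁₂, LinearMap.toMatrix₂'_compl₁₂,
      LinearMap.toMatrix'_id, Matrix.transpose_one, one_mul, mul_one,
      ← Matrix.toLin'_apply', LinearMap.toMatrix'_toLin'] at h2
  -- invertibility of P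
  have hPunit : IsUnit P := by
    rw [← Matrix.vecMul_injective_iff_isUnit]
    intro x x' hxx
    dsimp only at hxx
    have hsub : (x - x') ᵥ* P = 0 := by rw [Matrix.sub_vecMul, hxx, sub_self]
    have : x - x' = 0 := by
      refine hnd _ fun y => ?_
      rw [hb, Matrix.dotProduct_mulVec, hsub, zero_dotProduct]
    exact sub_eq_zero.mp this
  refine ⟨P⁻¹, Matrix.isUnit_nonsing_inv_iff.mpr hPunit, ?_⟩
  rw [Matrix.nonsing_inv_nonsing_inv _ ((Matrix.isUnit_iff_isUnit_det P).mp hPunit),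
    ← key, Matrix.mul_assoc, Matrix.mul_nonsing_inv _ ((Matrix.isUnit_iff_isUnit_det P).mp hPunit),
    Matrix.mul_one]


end Aux

/-- For any `A, B ∈ M_n(𝔽)`, the product `A B` is similar to `Bᵀ Aᵀ = (A B)ᵀ`. -/
theorem stmt16 {𝔽 : Type*} [Field 𝔽] {n : ℕ} (A B : Matrix (Fin n) (Fin n) 𝔽) :
    ∃ P : Matrix (Fin n) (Fin n) 𝔽, IsUnit P ∧
      Bᵀ * Aᵀ = P⁻¹ * (A * B) * P := by
  obtain ⟨P, hP, hsim⟩ := similar_transpose (A * B)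
  exact ⟨P, hP, by rwa [Matrix.transpose_mul] at hsim⟩
end
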